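/- arXiv:2410.23358 — 4 statements merged into one kernel-verified Lean document; each statement's English description precedes it below -/
import Mathlib

section
/- For all integers n ≥ 1 and k ≥ 1, the number of isomorphism classes of rank-n untwisted extended fission trees of slope k equals ψ(k+2,n). -/
/-- A fission chain of slope `≤ k` with `n` leaves: a chain of surjective maps of
finite sets `J₁ ↠ J₂ ↠ ⋯ ↠ J_{k+1}` with `|J₁| = n` and `|J_{k+1}| = 1`.
We encode `J_{i+1} := Fin (size i)`; the chain is prolonged trivially above
height `k+1` (all later sets necessarily also have one element, since all the
maps are surjective). -/
structure FChain (k n : ℕ) where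
  size : ℕ → ℕ
  map : ∀ i, Fin (size i) → Fin (size (i+1))
  surj : ∀ i, Function.Surjective (map i)
  size_zero : size 0 = n
  size_top : size k = 1

/-- A fission chain of slope `≤ k` has slope exactly `k` if `k = 0` or `|J_k| ≥ 2`
(here `J_k = Fin (size (k-1))`). -/
def FChain.ExactSlope {k n : ℕ} (c : FChain k n) : Prop :=
  k = 0 ∨ 2 ≤ c.size (k - 1)

/-- Isomorphism of fission chains: bijections between the corresponding sets
commuting with all the maps. -/
def FChain.Iso {k n m : ℕ} (c : FChain k n) (d : FChain k m) : Prop :=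
  ∃ e : ∀ i, Fin (c.size i) ≃ Fin (d.size i),
    ∀ i x, e (i+1) (c.map i x) = d.map i (e i x)

/-- `Φ(k,n)`: the number of isomorphism classes of fission chains of slope `≤ k`
with `n` leaves. -/
noncomputable def PhiBig (k n : ℕ) : ℕ :=
  Nat.card (Quot (fun c d : FChain k n => c.Iso d))

/-- `φ(k,n)`: the number of isomorphism classes of fission chains of slope
exactly `k` with `n` leaves. -/
noncomputable def phi (k n : ℕ) : ℕ :=
  Nat.card (Quot (fun c d : {c : FChain k n // c.ExactSlope} => c.1.Iso d.1))

/-- An untwisted fission tree of slope `k` and rank `n`: a fission chain of slope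
exactly `k` together with a multiplicity map `μ : J₁ → ℤ_{≥1}` with `Σ μ = n`. -/
structure FTree (k n : ℕ) where
  leaves : ℕ
  chain : FChain k leaves
  exact : chain.ExactSlope
  mult : Fin (chain.size 0) → ℕ
  mult_pos : ∀ i, 1 ≤ mult i
  mult_sum : ∑ i, mult i = n

/-- Isomorphism of untwisted fission trees: an isomorphism of the underlying
chains intertwining the multiplicity maps. -/
def FTree.Iso {k n : ℕ} (T U : FTree k n) : Prop :=
  ∃ e : ∀ i, Fin (T.chain.size i) ≃ Fin (U.chain.size i),
    (∀ i x, e (i+1) (T.chain.map i x) = U.chain.map i (e i x)) ∧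
    (∀ x, U.mult (e 0 x) = T.mult x)

/-- `ψ(k,n)`: the number of isomorphism classes of untwisted fission trees of
slope `k` and rank `n`. -/
noncomputable def psi (k n : ℕ) : ℕ :=
  Nat.card (Quot (fun T U : FTree k n => T.Iso U))

/-- A tame fission tree of rank `n`: a surjective map of finite sets
`J_{-1} ↠ J_0` together with a multiplicity map `μ : J_{-1} → ℤ_{≥1}` with
`Σ μ = n`. -/
structure Tame (n : ℕ) where
  a : ℕ
  b : ℕ
  f : Fin a → Fin b
  surj : Function.Surjective f
  μ : Fin a → ℕ
  μ_pos : ∀ i, 1 ≤ μ i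
  μ_sum : ∑ i, μ i = n

/-- A tame fission tree is semisimple if every Jordan block has size 1. -/
def Tame.Semisimple {n : ℕ} (t : Tame n) : Prop := ∀ i, t.μ i = 1

/-- Isomorphism of tame fission trees. -/
def Tame.Iso {n m : ℕ} (t : Tame n) (u : Tame m) : Prop :=
  ∃ (α : Fin t.a ≃ Fin u.a) (β : Fin t.b ≃ Fin u.b),
    (∀ x, β (t.f x) = u.f (α x)) ∧ ∀ x, u.μ (α x) = t.μ x

/-- An untwisted extended fission tree of slope `k` and rank `n`: an untwisted
fission tree of slope `k` together with a tame fission tree of rank `mult i`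
for each leaf `i`. -/
structure EFT (k n : ℕ) where
  leaves : ℕ
  chain : FChain k leaves
  exact : chain.ExactSlope
  mult : Fin (chain.size 0) → ℕ
  mult_pos : ∀ i, 1 ≤ mult i
  mult_sum : ∑ i, mult i = n
  tame : ∀ i : Fin (chain.size 0), Tame (mult i)

/-- An extended fission tree is semisimple if all its tame fission trees are. -/
def EFT.Semisimple {k n : ℕ} (T : EFT k n) : Prop := ∀ i, (T.tame i).Semisimple

/-- Isomorphism of extended fission trees: an isomorphism of the underlying
fission trees together with compatible isomorphisms of the tame fission trees
at the leaves. -/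
def EFT.Iso {k n : ℕ} (T U : EFT k n) : Prop :=
  ∃ e : ∀ i, Fin (T.chain.size i) ≃ Fin (U.chain.size i),
    (∀ i x, e (i+1) (T.chain.map i x) = U.chain.map i (e i x)) ∧
    (∀ x, U.mult (e 0 x) = T.mult x) ∧
    (∀ x, (T.tame x).Iso (U.tame (e 0 x)))

namespace CEFT

/-- Pack a sigma of `Fin`s into a single `Fin` (any equivalence will do). -/
noncomputable def pack {N : ℕ} (m : Fin N → ℕ) : (Σ i, Fin (m i)) ≃ Fin (∑ i, m i) :=
  (Fintype.equivFin _).trans (finCongr (by simp))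

/-- The fiber of `Sigma.fst` over `j` is the `j`-th component. -/
def fstFiber {ι : Type*} {β : ι → Type*} (j : ι) : {s : Σ i, β i // s.1 = j} ≃ β j where
  toFun s := s.2 ▸ s.1.2
  invFun y := ⟨⟨j, y⟩, rfl⟩
  left_inv := by rintro ⟨⟨i, y⟩, rfl⟩; rfl
  right_inv y := rfl

variable {k n : ℕ}

/-! ### The forward construction `F` -/

@[reducible] noncomputable def Fsize (T : EFT (k+1) n) : ℕ → ℕ
  | 0 => ∑ i, (T.tame i).a
  | 1 => ∑ i, (T.tame i).b
  | (i+2) => T.chain.size i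

noncomputable def Fmap (T : EFT (k+1) n) : ∀ i, Fin (Fsize T i) → Fin (Fsize T (i+1))
  | 0, x => pack (fun i => (T.tame i).b)
      ⟨((pack fun i => (T.tame i).a).symm x).1,
        (T.tame ((pack fun i => (T.tame i).a).symm x).1).f
          ((pack fun i => (T.tame i).a).symm x).2⟩
  | 1, x => ((pack fun i => (T.tame i).b).symm x).1
  | (i+2), x => T.chain.map i x

lemma a_pos (T : EFT (k+1) n) (j : Fin (T.chain.size 0)) : 0 < (T.tame j).a := by
  rcases Nat.eq_zero_or_pos (T.tame j).a with h | h
  · exfalso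
    have hs := (T.tame j).μ_sum
    have hp := T.mult_pos j
    haveI : IsEmpty (Fin ((T.tame j).a)) := by rw [h]; infer_instance
    rw [Finset.univ_eq_empty, Finset.sum_empty] at hs
    omega
  · exact h

lemma Fsurj (T : EFT (k+1) n) : ∀ i, Function.Surjective (Fmap T i)
  | 0 => by
    intro y
    obtain ⟨⟨j, z⟩, rfl⟩ := (pack fun i => (T.tame i).b).surjective y
    obtain ⟨x, hx⟩ := (T.tame j).surj z
    refine ⟨pack (fun i => (T.tame i).a) ⟨j, x⟩, ?_⟩
    simp only [Fmap]
    rw [Equiv.symm_apply_apply, hx]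
  | 1 => by
    intro j
    refine ⟨pack (fun i => (T.tame i).b) ⟨j, (T.tame j).f ⟨0, a_pos T j⟩⟩, ?_⟩
    simp [Fmap]
  | (i+2) => T.chain.surj i

noncomputable def Fchain (T : EFT (k+1) n) : FChain (k+3) (∑ i, (T.tame i).a) where
  size := Fsize T
  map := Fmap T
  surj := Fsurj T
  size_zero := rfl
  size_top := T.chain.size_top

noncomputable def Fmult (T : EFT (k+1) n) (x : Fin (∑ i, (T.tame i).a)) : ℕ :=
  (T.tame ((pack fun i => (T.tame i).a).symm x).1).μ ((pack fun i => (T.tame i).a).symm x).2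

lemma Fmult_pack (T : EFT (k+1) n) (s : Σ i, Fin ((T.tame i).a)) :
    Fmult T (pack (fun i => (T.tame i).a) s) = (T.tame s.1).μ s.2 := by
  simp only [Fmult]; rw [Equiv.symm_apply_apply]

noncomputable def F (T : EFT (k+1) n) : FTree (k+3) n where
  leaves := ∑ i, (T.tame i).a
  chain := Fchain T
  exact := Or.inr (T.exact.resolve_left (by omega))
  mult := Fmult T
  mult_pos x := (T.tame _).μ_pos _
  mult_sum := by
    show ∑ x : Fin (∑ i, (T.tame i).a), Fmult T x = n
    have h2 := Fmult_pack T
    rw [← Equiv.sum_comp (pack fun i => (T.tame i).a) (Fmult T)]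
    calc ∑ s : Σ i, Fin ((T.tame i).a), Fmult T (pack (fun i => (T.tame i).a) s)
        = ∑ s : Σ i, Fin ((T.tame i).a), (T.tame s.1).μ s.2 :=
          Finset.sum_congr rfl fun s _ => h2 s
      _ = ∑ i, ∑ y, (T.tame i).μ y := by rw [← Finset.univ_sigma_univ, Finset.sum_sigma]
      _ = ∑ i, T.mult i := Finset.sum_congr rfl fun i _ => (T.tame i).μ_sum
      _ = n := T.mult_sum

attribute [reducible] F Fchain

/-! ### The reverse construction `G` -/

def gf (T : FTree (k+3) n) : Fin (T.chain.size 0) → Fin (T.chain.size 2) :=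
  fun x => T.chain.map 1 (T.chain.map 0 x)

abbrev AF (T : FTree (k+3) n) (j : Fin (T.chain.size 2)) :=
  {x : Fin (T.chain.size 0) // gf T x = j}

abbrev BF (T : FTree (k+3) n) (j : Fin (T.chain.size 2)) :=
  {y : Fin (T.chain.size 1) // T.chain.map 1 y = j}

def bmk (T : FTree (k+3) n) (j : Fin (T.chain.size 2)) (s : AF T j) : BF T j :=
  ⟨T.chain.map 0 s.1, s.2⟩

noncomputable def Gtame (T : FTree (k+3) n) (j : Fin (T.chain.size 2)) :
    Tame (∑ x : AF T j, T.mult x.1) where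
  a := Fintype.card (AF T j)
  b := Fintype.card (BF T j)
  f x := (Fintype.equivFin (BF T j)) (bmk T j ((Fintype.equivFin (AF T j)).symm x))
  surj := by
    intro y'
    obtain ⟨⟨y, hy⟩, rfl⟩ := (Fintype.equivFin (BF T j)).surjective y'
    obtain ⟨x, rfl⟩ := T.chain.surj 0 y
    refine ⟨Fintype.equivFin (AF T j) ⟨x, hy⟩, ?_⟩
    show Fintype.equivFin (BF T j) (bmk T j ((Fintype.equivFin (AF T j)).symm
      (Fintype.equivFin (AF T j) ⟨x, hy⟩))) = Fintype.equivFin (BF T j) ⟨T.chain.map 0 x, hy⟩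
    rw [Equiv.symm_apply_apply]
    rfl
  μ x := T.mult ((Fintype.equivFin (AF T j)).symm x).1
  μ_pos x := T.mult_pos _
  μ_sum := Equiv.sum_comp (Fintype.equivFin (AF T j)).symm (fun s => T.mult s.1)

noncomputable def G (T : FTree (k+3) n) : EFT (k+1) n where
  leaves := T.chain.size 2
  chain := {
    size := fun i => T.chain.size (i+2)
    map := fun i => T.chain.map (i+2)
    surj := fun i => T.chain.surj (i+2)
    size_zero := rfl
    size_top := T.chain.size_top }
  exact := Or.inr (T.exact.resolve_left (by omega))
  mult j := ∑ x : AF T j, T.mult x.1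
  mult_pos := by
    intro j
    obtain ⟨x, hx⟩ := (T.chain.surj 1).comp (T.chain.surj 0) j
    calc 1 ≤ T.mult x := T.mult_pos x
      _ ≤ ∑ s : AF T j, T.mult s.1 :=
        Finset.single_le_sum (f := fun s : AF T j => T.mult s.1)
          (fun _ _ => Nat.zero_le _) (Finset.mem_univ ⟨x, hx⟩)
  mult_sum := (Fintype.sum_fiberwise (gf T) T.mult).trans T.mult_sum
  tame := Gtame T

attribute [reducible] G

/-! ### `F` preserves isomorphism -/

noncomputable def Fe (T U : EFT (k+1) n) (e : ∀ i, Fin (T.chain.size i) ≃ Fin (U.chain.size i))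
    (α : ∀ x, Fin (T.tame x).a ≃ Fin (U.tame (e 0 x)).a)
    (β : ∀ x, Fin (T.tame x).b ≃ Fin (U.tame (e 0 x)).b) :
    ∀ i, Fin (Fsize T i) ≃ Fin (Fsize U i)
  | 0 => ((pack fun i => (T.tame i).a).symm.trans
      (Equiv.sigmaCongr (e 0) α)).trans (pack fun i => (U.tame i).a)
  | 1 => ((pack fun i => (T.tame i).b).symm.trans
      (Equiv.sigmaCongr (e 0) β)).trans (pack fun i => (U.tame i).b)
  | (i+2) => e i

lemma F_iso {T U : EFT (k+1) n} (h : T.Iso U) : (F T).Iso (F U) := by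
  obtain ⟨e, hcomm, hmult, htame⟩ := h
  choose α β hf hμ using htame
  refine ⟨Fe T U e α β, ?_, ?_⟩
  · intro i x
    match i with
    | 0 =>
      obtain ⟨⟨j, z⟩, rfl⟩ := (pack fun i => (T.tame i).a).surjective x
      show Fe T U e α β 1 (Fmap T 0 _) = Fmap U 0 (Fe T U e α β 0 _)
      simp only [Fmap, Fe, Equiv.trans_apply]
      rw [Equiv.symm_apply_apply, Equiv.symm_apply_apply]; try rw [Equiv.symm_apply_apply]
      exact congrArg _ (Sigma.ext rfl (heq_of_eq (hf j z)))
    | 1 =>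
      obtain ⟨⟨j, z⟩, rfl⟩ := (pack fun i => (T.tame i).b).surjective x
      show Fe T U e α β 2 (Fmap T 1 _) = Fmap U 1 (Fe T U e α β 1 _)
      simp only [Fmap, Fe, Equiv.trans_apply]
      rw [Equiv.symm_apply_apply, Equiv.symm_apply_apply]; try rw [Equiv.symm_apply_apply]
      rfl
    | (i+2) =>
      exact hcomm i x
  · intro x
    obtain ⟨⟨j, z⟩, rfl⟩ := (pack fun i => (T.tame i).a).surjective x
    show Fmult U (Fe T U e α β 0 _) = Fmult T _
    simp only [Fmult, Fe, Equiv.trans_apply]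
    rw [Equiv.symm_apply_apply, Equiv.symm_apply_apply]; try rw [Equiv.symm_apply_apply]
    exact hμ j z

/-! ### `G` preserves isomorphism -/

noncomputable def AEquiv {T U : FTree (k+3) n}
    (e0 : Fin (T.chain.size 0) ≃ Fin (U.chain.size 0))
    (e2 : Fin (T.chain.size 2) ≃ Fin (U.chain.size 2))
    (key : ∀ x, gf U (e0 x) = e2 (gf T x)) (j : Fin (T.chain.size 2)) :
    AF T j ≃ AF U (e2 j) :=
  e0.subtypeEquiv fun x => by rw [key x]; exact (Equiv.apply_eq_iff_eq e2).symm

noncomputable def BEquiv {T U : FTree (k+3) n}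
    (e1 : Fin (T.chain.size 1) ≃ Fin (U.chain.size 1))
    (e2 : Fin (T.chain.size 2) ≃ Fin (U.chain.size 2))
    (key : ∀ y, U.chain.map 1 (e1 y) = e2 (T.chain.map 1 y)) (j : Fin (T.chain.size 2)) :
    BF T j ≃ BF U (e2 j) :=
  e1.subtypeEquiv fun y => by rw [key y]; exact (Equiv.apply_eq_iff_eq e2).symm

lemma G_iso {T U : FTree (k+3) n} (h : T.Iso U) : (G T).Iso (G U) := by
  obtain ⟨e, hcomm, hmult⟩ := h
  have key1 : ∀ y, U.chain.map 1 (e 1 y) = e 2 (T.chain.map 1 y) := fun y => (hcomm 1 y).symm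
  have key : ∀ x, gf U (e 0 x) = e 2 (gf T x) := by
    intro x
    show U.chain.map 1 (U.chain.map 0 (e 0 x)) = _
    rw [← hcomm 0, key1]
    rfl
  refine ⟨fun i => e (i+2), fun i x => hcomm (i+2) x, ?_, ?_⟩
  · intro j
    show ∑ s : AF U (e 2 j), U.mult s.1 = ∑ s : AF T j, T.mult s.1
    rw [← Equiv.sum_comp (AEquiv (e 0) (e 2) key j) (fun s => U.mult s.1)]
    exact Finset.sum_congr rfl fun s _ => hmult s.1
  · intro j
    refine ⟨(Fintype.equivFin (AF T j)).symm.trans ((AEquiv (e 0) (e 2) key j).trans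
        (Fintype.equivFin (AF U (e 2 j)))),
      (Fintype.equivFin (BF T j)).symm.trans ((BEquiv (e 1) (e 2) key1 j).trans
        (Fintype.equivFin (BF U (e 2 j)))), ?_, ?_⟩
    · intro x
      show Fintype.equivFin (BF U (e 2 j)) ((BEquiv (e 1) (e 2) key1 j)
          ((Fintype.equivFin (BF T j)).symm (Fintype.equivFin (BF T j)
            (bmk T j ((Fintype.equivFin (AF T j)).symm x)))))
        = Fintype.equivFin (BF U (e 2 j)) (bmk U (e 2 j)
            ((Fintype.equivFin (AF U (e 2 j))).symm (Fintype.equivFin (AF U (e 2 j))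
              ((AEquiv (e 0) (e 2) key j) ((Fintype.equivFin (AF T j)).symm x)))))
      rw [Equiv.symm_apply_apply, Equiv.symm_apply_apply]
      exact congrArg _ (Subtype.ext (hcomm 0 _))
    · intro x
      show U.mult ((Fintype.equivFin (AF U (e 2 j))).symm ((Fintype.equivFin (AF U (e 2 j)))
          ((AEquiv (e 0) (e 2) key j) ((Fintype.equivFin (AF T j)).symm x)))).1
        = T.mult ((Fintype.equivFin (AF T j)).symm x).1
      rw [Equiv.symm_apply_apply]
      exact hmult _

/-! ### Round trip `G ∘ F` -/

lemma gf_F (T : EFT (k+1) n) (s : Σ i, Fin ((T.tame i).a)) :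
    gf (F T) (pack (fun i => (T.tame i).a) s) = s.1 := by
  show Fmap T 1 (Fmap T 0 _) = s.1
  simp only [Fmap]
  rw [Equiv.symm_apply_apply, Equiv.symm_apply_apply]

noncomputable def AFT (T : EFT (k+1) n) (j : Fin (T.chain.size 0)) :
    Fin ((T.tame j).a) ≃ AF (F T) j :=
  ((fstFiber (β := fun i => Fin ((T.tame i).a)) j).symm.trans
    (Equiv.subtypeEquiv (pack fun i => (T.tame i).a)
      (fun s => ⟨fun hs => (gf_F T s).trans hs, fun hx => (gf_F T s).symm.trans hx⟩)))

lemma map1_F (T : EFT (k+1) n) (s : Σ i, Fin ((T.tame i).b)) :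
    (F T).chain.map 1 (pack (fun i => (T.tame i).b) s) = s.1 := by
  show Fmap T 1 _ = s.1
  simp only [Fmap]
  rw [Equiv.symm_apply_apply]

noncomputable def BFT (T : EFT (k+1) n) (j : Fin (T.chain.size 0)) :
    Fin ((T.tame j).b) ≃ BF (F T) j :=
  ((fstFiber (β := fun i => Fin ((T.tame i).b)) j).symm.trans
    (Equiv.subtypeEquiv (pack fun i => (T.tame i).b)
      (fun s => ⟨fun hs => (map1_F T s).trans hs, fun hx => (map1_F T s).symm.trans hx⟩)))

lemma GF_iso (T : EFT (k+1) n) : (G (F T)).Iso T := by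
  refine ⟨fun i => Equiv.refl _, fun i x => rfl, ?_, ?_⟩
  · intro j
    show T.mult j = ∑ s : AF (F T) j, Fmult T s.1
    calc T.mult j = ∑ y, (T.tame j).μ y := (T.tame j).μ_sum.symm
      _ = ∑ y, Fmult T ((AFT T j y).1) :=
          Finset.sum_congr rfl fun y _ => (Fmult_pack T ⟨j, y⟩).symm
      _ = ∑ s : AF (F T) j, Fmult T s.1 := Equiv.sum_comp (AFT T j) (fun s => Fmult T s.1)
  · intro j
    refine ⟨(Fintype.equivFin (AF (F T) j)).symm.trans (AFT T j).symm,
      (Fintype.equivFin (BF (F T) j)).symm.trans (BFT T j).symm, ?_, ?_⟩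
    · intro x
      show (BFT T j).symm ((Fintype.equivFin (BF (F T) j)).symm (Fintype.equivFin (BF (F T) j)
          (bmk (F T) j ((Fintype.equivFin (AF (F T) j)).symm x))))
        = (T.tame j).f ((AFT T j).symm ((Fintype.equivFin (AF (F T) j)).symm x))
      rw [Equiv.symm_apply_apply]
      generalize (Fintype.equivFin (AF (F T) j)).symm x = s
      obtain ⟨z, rfl⟩ := (AFT T j).surjective s
      rw [Equiv.symm_apply_apply, Equiv.symm_apply_eq]
      refine Subtype.ext ?_
      show Fmap T 0 (pack (fun i => (T.tame i).a) ⟨j, z⟩)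
        = pack (fun i => (T.tame i).b) ⟨j, (T.tame j).f z⟩
      simp only [Fmap]
      rw [Equiv.symm_apply_apply]
    · intro x
      show (T.tame j).μ ((AFT T j).symm ((Fintype.equivFin (AF (F T) j)).symm x))
        = Fmult T ((Fintype.equivFin (AF (F T) j)).symm x).1
      generalize (Fintype.equivFin (AF (F T) j)).symm x = s
      obtain ⟨z, rfl⟩ := (AFT T j).surjective s
      rw [Equiv.symm_apply_apply]
      exact (Fmult_pack T ⟨j, z⟩).symm

/-! ### Round trip `F ∘ G` -/

noncomputable def FGe (T : FTree (k+3) n) : ∀ i, Fin (Fsize (G T) i) ≃ Fin (T.chain.size i)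
  | 0 => ((pack fun j => ((G T).tame j).a).symm.trans
      (Equiv.sigmaCongrRight fun j => (Fintype.equivFin (AF T j)).symm)).trans
      (Equiv.sigmaFiberEquiv (gf T))
  | 1 => ((pack fun j => ((G T).tame j).b).symm.trans
      (Equiv.sigmaCongrRight fun j => (Fintype.equivFin (BF T j)).symm)).trans
      (Equiv.sigmaFiberEquiv (T.chain.map 1))
  | (i+2) => Equiv.refl _

lemma FGe0_pack (T : FTree (k+3) n) (j : Fin ((G T).chain.size 0)) (z : Fin (((G T).tame j).a)) :
    FGe T 0 (pack (fun j => ((G T).tame j).a) ⟨j, z⟩)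
      = ((Fintype.equivFin (AF T j)).symm z).1 := by
  simp only [FGe, Equiv.trans_apply]
  rw [Equiv.symm_apply_apply]
  rfl

lemma FGe1_pack (T : FTree (k+3) n) (j : Fin ((G T).chain.size 0)) (z : Fin (((G T).tame j).b)) :
    FGe T 1 (pack (fun j => ((G T).tame j).b) ⟨j, z⟩)
      = ((Fintype.equivFin (BF T j)).symm z).1 := by
  simp only [FGe, Equiv.trans_apply]
  rw [Equiv.symm_apply_apply]
  rfl

lemma FG_iso (T : FTree (k+3) n) : (F (G T)).Iso T := by
  refine ⟨FGe T, ?_, ?_⟩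
  · intro i x
    match i with
    | 0 =>
      obtain ⟨⟨j, z⟩, rfl⟩ := (pack fun j => ((G T).tame j).a).surjective x
      show FGe T 1 (Fmap (G T) 0 _) = T.chain.map 0 (FGe T 0 _)
      rw [show Fmap (G T) 0 (pack (fun j => ((G T).tame j).a) ⟨j, z⟩)
          = pack (fun j => ((G T).tame j).b) ⟨j, ((G T).tame j).f z⟩ from by
        simp only [Fmap]; rw [Equiv.symm_apply_apply]]
      rw [FGe1_pack, FGe0_pack]
      show ((Fintype.equivFin (BF T j)).symm ((Fintype.equivFin (BF T j))
          (bmk T j ((Fintype.equivFin (AF T j)).symm z)))).1 = _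
      rw [Equiv.symm_apply_apply]
      rfl
    | 1 =>
      obtain ⟨⟨j, z⟩, rfl⟩ := (pack fun j => ((G T).tame j).b).surjective x
      show FGe T 2 (Fmap (G T) 1 _) = T.chain.map 1 (FGe T 1 _)
      rw [FGe1_pack, ((Fintype.equivFin (BF T j)).symm z).2]
      show ((pack (fun j => ((G T).tame j).b)).symm
        (pack (fun j => ((G T).tame j).b) ⟨j, z⟩)).1 = j
      rw [Equiv.symm_apply_apply]
    | (i+2) => rfl
  · intro x
    obtain ⟨⟨j, z⟩, rfl⟩ := (pack fun j => ((G T).tame j).a).surjective x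
    show T.mult (FGe T 0 (pack (fun j => ((G T).tame j).a) ⟨j, z⟩))
      = Fmult (G T) (pack (fun j => ((G T).tame j).a) ⟨j, z⟩)
    rw [FGe0_pack]
    exact (Fmult_pack (G T) ⟨j, z⟩).symm

/-! ### Conclusion -/

noncomputable def quotEquiv (k n : ℕ) :
    Quot (fun T U : EFT (k+1) n => T.Iso U) ≃ Quot (fun T U : FTree (k+3) n => T.Iso U) where
  toFun := Quot.lift (fun T => Quot.mk _ (F T)) fun T U h => Quot.sound (F_iso h)
  invFun := Quot.lift (fun T => Quot.mk _ (G T)) fun T U h => Quot.sound (G_iso h)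
  left_inv := by
    intro q
    induction q using Quot.ind with
    | _ T => exact Quot.sound (GF_iso T)
  right_inv := by
    intro q
    induction q using Quot.ind with
    | _ T => exact Quot.sound (FG_iso T)

end CEFT

/-- For n, k ≥ 1, the number of isomorphism classes of rank-n untwisted extended
fission trees of slope k equals ψ(k+2,n). -/
theorem count_extended_fission_trees (k n : ℕ) (hk : 1 ≤ k) (hn : 1 ≤ n) :
    Nat.card (Quot (fun T U : EFT k n => T.Iso U)) = psi (k+2) n := by
  obtain ⟨k, rfl⟩ : ∃ m, k = m + 1 := ⟨k - 1, by omega⟩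
  exact Nat.card_congr (CEFT.quotEquiv k n)
end

section
/- For all integers n ≥ 1 and k ≥ 1, the number of isomorphism classes of rank-n semisimple untwisted extended fission trees of slope k equals φ(k+2,n). -/
section Aux

open Function

/-! ### Generic helpers -/

noncomputable def sigEquiv {m : ℕ} (A : Fin m → ℕ) : (Σ i, Fin (A i)) ≃ Fin (∑ i, A i) :=
  Fintype.equivFinOfCardEq (by simp)

def fstFiber {m : ℕ} {A : Fin m → ℕ} (x : Fin m) :
    {w : Σ i, Fin (A i) // w.1 = x} ≃ Fin (A x) where
  toFun w := Fin.cast (congrArg A w.2) w.1.2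
  invFun u := ⟨⟨x, u⟩, rfl⟩
  left_inv := by rintro ⟨⟨i, u⟩, rfl⟩; rfl
  right_inv u := rfl

noncomputable def fiberEquiv {m s : ℕ} {A : Fin m → ℕ} (σ : (Σ i, Fin (A i)) ≃ Fin s)
    (x : Fin m) : {z : Fin s // (σ.symm z).1 = x} ≃ Fin (A x) :=
  (σ.symm.subtypeEquiv (q := fun w => w.1 = x) (fun _ => Iff.rfl)).trans (fstFiber x)

/-! ### Basic facts about tame trees in a semisimple EFT -/

variable {k n : ℕ}

lemma a_pos (T : EFT k n) (i : Fin (T.chain.size 0)) : 1 ≤ (T.tame i).a := by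
  by_contra h
  have h0 : (T.tame i).a = 0 := by omega
  have hs := (T.tame i).μ_sum
  have : IsEmpty (Fin ((T.tame i).a)) := by rw [h0]; infer_instance
  rw [Finset.univ_eq_empty, Finset.sum_empty] at hs
  have := T.mult_pos i
  omega

lemma a_eq {T : EFT k n} (hss : T.Semisimple) (i : Fin (T.chain.size 0)) :
    (T.tame i).a = T.mult i := by
  have h := (T.tame i).μ_sum
  rw [Finset.sum_congr rfl (fun j _ => hss i j)] at h
  simpa using h

/-! ### The gluing construction `F` -/

noncomputable def Fsize (T : EFT k n) : ℕ → ℕ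
  | 0 => ∑ j, (T.tame j).a
  | 1 => ∑ j, (T.tame j).b
  | (i+2) => T.chain.size i

noncomputable def Fmap (T : EFT k n) : ∀ i, Fin (Fsize T i) → Fin (Fsize T (i+1))
  | 0 => fun z =>
      sigEquiv (fun j => (T.tame j).b)
        ⟨((sigEquiv (fun j => (T.tame j).a)).symm z).1,
         (T.tame _).f (((sigEquiv (fun j => (T.tame j).a)).symm z).2)⟩
  | 1 => fun z => ((sigEquiv (fun j => (T.tame j).b)).symm z).1
  | (i+2) => T.chain.map i

lemma Fmap_zero (T : EFT k n) (j : Fin (T.chain.size 0)) (u : Fin (T.tame j).a) :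
    Fmap T 0 (sigEquiv (fun j => (T.tame j).a) ⟨j, u⟩) =
      sigEquiv (fun j => (T.tame j).b) ⟨j, (T.tame j).f u⟩ :=
  congrArg (fun w : Σ j, Fin (T.tame j).a =>
    (sigEquiv fun j => (T.tame j).b) ⟨w.1, (T.tame w.1).f w.2⟩)
    (Equiv.symm_apply_apply (sigEquiv fun j => (T.tame j).a) ⟨j, u⟩)

lemma Fmap_one (T : EFT k n) (j : Fin (T.chain.size 0)) (v : Fin (T.tame j).b) :
    Fmap T 1 (sigEquiv (fun j => (T.tame j).b) ⟨j, v⟩) = j :=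
  congrArg Sigma.fst (Equiv.symm_apply_apply (sigEquiv (fun j => (T.tame j).b)) ⟨j, v⟩)

lemma Fsurj (T : EFT k n) : ∀ i, Surjective (Fmap T i)
  | 0 => by
      intro z
      obtain ⟨⟨j, v⟩, rfl⟩ := (sigEquiv fun j => (T.tame j).b).surjective z
      obtain ⟨u, hu⟩ := (T.tame j).surj v
      exact ⟨sigEquiv (fun j => (T.tame j).a) ⟨j, u⟩, by rw [Fmap_zero]; simp [hu]; rfl⟩
  | 1 => by
      intro j
      exact ⟨sigEquiv (fun j => (T.tame j).b) ⟨j, (T.tame j).f ⟨0, a_pos T j⟩⟩, by exact Fmap_one T j _⟩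
  | (i+2) => T.chain.surj i

noncomputable def Fc (T : EFT k n) (hss : T.Semisimple) : FChain (k+2) n where
  size := Fsize T
  map := Fmap T
  surj := Fsurj T
  size_zero := by
    show ∑ j, (T.tame j).a = n
    rw [Finset.sum_congr rfl (fun j _ => a_eq hss j)]
    exact T.mult_sum
  size_top := T.chain.size_top

lemma Fc_exact (T : EFT k n) (hss : T.Semisimple) (hk : 1 ≤ k) : (Fc T hss).ExactSlope := by
  obtain ⟨k', rfl⟩ : ∃ k', k = k'+1 := ⟨k-1, (Nat.succ_pred_eq_of_pos hk).symm⟩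
  right
  show 2 ≤ Fsize T (k'+1+2-1)
  have h : 2 ≤ T.chain.size k' := by
    rcases T.exact with h | h
    · omega
    · simpa using h
  show 2 ≤ Fsize T (k'+2)
  exact h

end Aux
section Aux2

open Function

variable {k n : ℕ}

/-! ### The fiber construction `G` -/

noncomputable def Gchain (c : FChain (k+2) n) : FChain k (c.size 2) where
  size i := c.size (i+2)
  map i := c.map (i+2)
  surj i := c.surj (i+2)
  size_zero := rfl
  size_top := c.size_top

/-- fiber of the composite map over a leaf -/
abbrev Fib0 (c : FChain (k+2) n) (i : Fin (c.size 2)) : Type :=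
  {x : Fin (c.size 0) // c.map 1 (c.map 0 x) = i}

abbrev Fib1 (c : FChain (k+2) n) (i : Fin (c.size 2)) : Type :=
  {y : Fin (c.size 1) // c.map 1 y = i}

noncomputable def Gtame (c : FChain (k+2) n) (i : Fin (c.size 2)) :
    Tame (Fintype.card (Fib0 c i)) where
  a := Fintype.card (Fib0 c i)
  b := Fintype.card (Fib1 c i)
  f u := Fintype.equivFin (Fib1 c i)
    ⟨c.map 0 ((Fintype.equivFin (Fib0 c i)).symm u).1,
     ((Fintype.equivFin (Fib0 c i)).symm u).2⟩
  surj := by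
    intro v
    obtain ⟨⟨y, hy⟩, rfl⟩ := (Fintype.equivFin (Fib1 c i)).surjective v
    obtain ⟨x, hx⟩ := c.surj 0 y
    refine ⟨Fintype.equivFin (Fib0 c i) ⟨x, by rw [hx]; exact hy⟩, ?_⟩
    simp only [Equiv.symm_apply_apply]
    exact congrArg _ (Subtype.ext hx)
  μ _ := 1
  μ_pos _ := le_refl 1
  μ_sum := by simp

lemma Gchain_exact (c : FChain (k+2) n) (hc : c.ExactSlope) (hk : 1 ≤ k) :
    (Gchain c).ExactSlope := by
  obtain ⟨k', rfl⟩ : ∃ k', k = k'+1 := ⟨k-1, (Nat.succ_pred_eq_of_pos hk).symm⟩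
  right
  show 2 ≤ c.size (k'+1-1+2)
  rcases hc with h | h
  · omega
  · have : k'+1-1+2 = k'+1+2-1 := by omega
    rw [this]; exact h

noncomputable def Gc (c : FChain (k+2) n) (hc : c.ExactSlope) (hk : 1 ≤ k) : EFT k n where
  leaves := c.size 2
  chain := Gchain c
  exact := Gchain_exact c hc hk
  mult (i : Fin (c.size 2)) := Fintype.card (Fib0 c i)
  mult_pos (i : Fin (c.size 2)) := by
    have : Surjective (fun x => c.map 1 (c.map 0 x)) := (c.surj 1).comp (c.surj 0)
    obtain ⟨x, hx⟩ := this i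
    exact Fintype.card_pos_iff.mpr ⟨⟨x, hx⟩⟩
  mult_sum := by
    have h := Fintype.card_congr
      (Equiv.sigmaFiberEquiv (fun x : Fin (c.size 0) => c.map 1 (c.map 0 x)))
    rw [Fintype.card_sigma, Fintype.card_fin] at h
    exact h.trans c.size_zero
  tame i := Gtame c i

lemma Gc_ss (c : FChain (k+2) n) (hc : c.ExactSlope) (hk : 1 ≤ k) :
    (Gc c hc hk).Semisimple := fun _ _ => rfl

end Aux2
section Aux3

variable {k n : ℕ}

noncomputable def Ec (c : FChain (k+2) n) (hc : c.ExactSlope) (hk : 1 ≤ k) :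
    ∀ i, Fin (Fsize (Gc c hc hk) i) ≃ Fin (c.size i)
  | 0 => ((sigEquiv fun j => ((Gc c hc hk).tame j).a).symm).trans
      ((Equiv.sigmaCongrRight (fun j => (Fintype.equivFin (Fib0 c j)).symm)).trans
        (Equiv.sigmaFiberEquiv fun x => c.map 1 (c.map 0 x)))
  | 1 => ((sigEquiv fun j => ((Gc c hc hk).tame j).b).symm).trans
      ((Equiv.sigmaCongrRight (fun j => (Fintype.equivFin (Fib1 c j)).symm)).trans
        (Equiv.sigmaFiberEquiv fun y => c.map 1 y))
  | (i+2) => Equiv.refl _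

lemma FGc_iso (c : FChain (k+2) n) (hc : c.ExactSlope) (hk : 1 ≤ k) :
    (Fc (Gc c hc hk) (Gc_ss c hc hk)).Iso c := by
  refine ⟨Ec c hc hk, ?_⟩
  intro i x
  show Ec c hc hk (i+1) (Fmap (Gc c hc hk) i x) = c.map i (Ec c hc hk i x)
  rcases i with (_|(_|i))
  · obtain ⟨⟨j, u⟩, rfl⟩ := (sigEquiv fun j => ((Gc c hc hk).tame j).a).surjective x
    rw [Fmap_zero]
    simp only [Ec, Equiv.trans_apply]
    have hA := Equiv.symm_apply_apply (sigEquiv fun j => ((Gc c hc hk).tame j).a)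
      (⟨j, u⟩ : Σ j, Fin ((Gc c hc hk).tame j).a)
    have hB := Equiv.symm_apply_apply (sigEquiv fun j => ((Gc c hc hk).tame j).b)
      (⟨j, ((Gc c hc hk).tame j).f u⟩ : Σ j, Fin ((Gc c hc hk).tame j).b)
    show (Equiv.sigmaFiberEquiv fun y => c.map 1 y) ((Equiv.sigmaCongrRight (fun j => (Fintype.equivFin (Fib1 c j)).symm)) ((sigEquiv fun j => ((Gc c hc hk).tame j).b).symm ((sigEquiv fun j => ((Gc c hc hk).tame j).b) ⟨j, ((Gc c hc hk).tame j).f u⟩))) =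
      c.map 0 ((Equiv.sigmaFiberEquiv fun x => c.map 1 (c.map 0 x)) ((Equiv.sigmaCongrRight (fun j => (Fintype.equivFin (Fib0 c j)).symm)) ((sigEquiv fun j => ((Gc c hc hk).tame j).a).symm ((sigEquiv fun j => ((Gc c hc hk).tame j).a) ⟨j, u⟩))))
    erw [hA, hB]
    obtain ⟨j, rfl⟩ : ∃ j' : Fin (c.size 2), j' = j := ⟨j, rfl⟩
    show (((Fintype.equivFin (Fib1 c j)).symm ((Gtame c j).f u) : Fib1 c j) : Fin (c.size 1)) =
      c.map 0 (((Fintype.equivFin (Fib0 c j)).symm u : Fib0 c j) : Fin (c.size 0))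
    unfold Gtame
    rw [Equiv.symm_apply_apply]
  · obtain ⟨⟨j, v⟩, rfl⟩ := (sigEquiv fun j => ((Gc c hc hk).tame j).b).surjective x
    rw [Fmap_one]
    simp only [Ec, Equiv.trans_apply, Equiv.refl_apply]
    have hB := Equiv.symm_apply_apply (sigEquiv fun j => ((Gc c hc hk).tame j).b)
      (⟨j, v⟩ : Σ j, Fin ((Gc c hc hk).tame j).b)
    show j = c.map 1 ((Equiv.sigmaFiberEquiv fun y => c.map 1 y) ((Equiv.sigmaCongrRight (fun j => (Fintype.equivFin (Fib1 c j)).symm)) ((sigEquiv fun j => ((Gc c hc hk).tame j).b).symm ((sigEquiv fun j => ((Gc c hc hk).tame j).b) ⟨j, v⟩))))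
    erw [hB]
    obtain ⟨j, rfl⟩ : ∃ j' : Fin (c.size 2), j' = j := ⟨j, rfl⟩
    exact (((Fintype.equivFin (Fib1 c j)).symm v).2).symm
  · rfl

end Aux3
section Aux4

variable {k n : ℕ}

/-! ### Functoriality of `F` -/

noncomputable def EL1 (T U : EFT k n) (e : ∀ i, Fin (T.chain.size i) ≃ Fin (U.chain.size i))
    (α : ∀ x, Fin (T.tame x).a ≃ Fin ((U.tame (e 0 x)).a))
    (β : ∀ x, Fin (T.tame x).b ≃ Fin ((U.tame (e 0 x)).b)) :
    ∀ i, Fin (Fsize T i) ≃ Fin (Fsize U i)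
  | 0 => (sigEquiv fun j => (T.tame j).a).symm.trans
      ((Equiv.sigmaCongr (e 0) α).trans (sigEquiv fun j => (U.tame j).a))
  | 1 => (sigEquiv fun j => (T.tame j).b).symm.trans
      ((Equiv.sigmaCongr (e 0) β).trans (sigEquiv fun j => (U.tame j).b))
  | (i+2) => e i

lemma Fc_iso_of_iso {T U : EFT k n} (hT : T.Semisimple) (hU : U.Semisimple)
    (h : T.Iso U) : (Fc T hT).Iso (Fc U hU) := by
  obtain ⟨e, hcomm, hmult, htame⟩ := h
  choose α β hfa hμ using htame
  refine ⟨EL1 T U e α β, ?_⟩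
  intro i x
  show EL1 T U e α β (i+1) (Fmap T i x) = Fmap U i (EL1 T U e α β i x)
  rcases i with (_|(_|i))
  · obtain ⟨⟨j, u⟩, rfl⟩ := (sigEquiv fun j => (T.tame j).a).surjective x
    rw [Fmap_zero]
    simp only [EL1, Equiv.trans_apply]
    show (sigEquiv fun j => (U.tame j).b) ((Equiv.sigmaCongr (e 0) β) ((sigEquiv fun j => (T.tame j).b).symm ((sigEquiv fun j => (T.tame j).b) ⟨j, (T.tame j).f u⟩))) =
      Fmap U 0 ((sigEquiv fun j => (U.tame j).a) ((Equiv.sigmaCongr (e 0) α) ((sigEquiv fun j => (T.tame j).a).symm ((sigEquiv fun j => (T.tame j).a) ⟨j, u⟩))))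
    erw [Equiv.symm_apply_apply, Equiv.symm_apply_apply]
    show (sigEquiv fun j => (U.tame j).b) ⟨e 0 j, β j ((T.tame j).f u)⟩ =
      Fmap U 0 ((sigEquiv fun j => (U.tame j).a) ⟨e 0 j, α j u⟩)
    rw [Fmap_zero U (e 0 j) (α j u), hfa j u]
  · obtain ⟨⟨j, v⟩, rfl⟩ := (sigEquiv fun j => (T.tame j).b).surjective x
    rw [Fmap_one]
    simp only [EL1, Equiv.trans_apply]
    show e 0 j = Fmap U 1 ((sigEquiv fun j => (U.tame j).b) ((Equiv.sigmaCongr (e 0) β) ((sigEquiv fun j => (T.tame j).b).symm ((sigEquiv fun j => (T.tame j).b) ⟨j, v⟩))))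
    erw [Equiv.symm_apply_apply]
    show e 0 j = Fmap U 1 ((sigEquiv fun j => (U.tame j).b) ⟨e 0 j, β j v⟩)
    rw [Fmap_one U (e 0 j) (β j v)]
  · exact hcomm i x

/-! ### Arrow isomorphisms -/

def AIso {A B C D : Type} (f : A → B) (g : C → D) : Prop :=
  ∃ (p : A ≃ C) (q : B ≃ D), ∀ a, q (f a) = g (p a)

lemma AIso.symm {A B C D : Type} {f : A → B} {g : C → D} (h : AIso f g) : AIso g f := by
  obtain ⟨p, q, hpq⟩ := h
  refine ⟨p.symm, q.symm, fun a => q.injective ?_⟩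
  rw [Equiv.apply_symm_apply, hpq, Equiv.apply_symm_apply]

lemma AIso.trans {A B C D X Y : Type} {f : A → B} {g : C → D} {h : X → Y}
    (h1 : AIso f g) (h2 : AIso g h) : AIso f h := by
  obtain ⟨p, q, hpq⟩ := h1
  obtain ⟨p', q', hpq'⟩ := h2
  exact ⟨p.trans p', q.trans q', fun a => by
    simp only [Equiv.trans_apply, hpq, hpq']⟩

/-! ### Reflection of isomorphisms by `F` -/

lemma idx_Fmap0 (T : EFT k n) (z : Fin (Fsize T 0)) :
    ((sigEquiv fun j => (T.tame j).b).symm (Fmap T 0 z)).1 =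
      ((sigEquiv fun j => (T.tame j).a).symm z).1 := by
  obtain ⟨⟨j, u⟩, rfl⟩ := (sigEquiv fun j => (T.tame j).a).surjective z
  rw [Fmap_zero]
  erw [Equiv.symm_apply_apply, Equiv.symm_apply_apply]

/-- the restriction of the bottom gluing map to the fibers over a leaf `x` -/
noncomputable def restr (T : EFT k n) (x : Fin (T.chain.size 0)) :
    {z : Fin (Fsize T 0) // ((sigEquiv fun j => (T.tame j).a).symm z).1 = x} →
    {z : Fin (Fsize T 1) // ((sigEquiv fun j => (T.tame j).b).symm z).1 = x} :=
  fun z => ⟨Fmap T 0 z.1, by rw [idx_Fmap0]; exact z.2⟩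

lemma tameArrow (T : EFT k n) (x : Fin (T.chain.size 0)) :
    AIso ((T.tame x).f) (restr T x) := by
  refine ⟨(fiberEquiv (sigEquiv fun j => (T.tame j).a) x).symm,
    (fiberEquiv (sigEquiv fun j => (T.tame j).b) x).symm, fun u => Subtype.ext ?_⟩
  show ((sigEquiv fun j => (T.tame j).b) ⟨x, (T.tame x).f u⟩ : Fin (Fsize T 1)) =
    Fmap T 0 ((sigEquiv fun j => (T.tame j).a) ⟨x, u⟩)
  rw [Fmap_zero]

lemma iso_of_Fc_iso {T U : EFT k n} (hT : T.Semisimple) (hU : U.Semisimple)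
    (h : (Fc T hT).Iso (Fc U hU)) : T.Iso U := by
  obtain ⟨E, hE⟩ := h
  replace hE : ∀ i x, E (i+1) (Fmap T i x) = Fmap U i (E i x) := hE
  have key : ∀ z : Fin (Fsize T 0),
      ((sigEquiv fun j => (U.tame j).a).symm (E 0 z)).1 =
        E 2 (((sigEquiv fun j => (T.tame j).a).symm z).1) := by
    intro z
    exact (idx_Fmap0 U (E 0 z)).symm.trans ((congrArg (Fmap U 1) (hE 0 z).symm).trans
      ((hE 1 (Fmap T 0 z)).symm.trans (congrArg (E 2) (idx_Fmap0 T z))))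
  have key1 : ∀ z : Fin (Fsize T 1),
      ((sigEquiv fun j => (U.tame j).b).symm (E 1 z)).1 =
        E 2 (((sigEquiv fun j => (T.tame j).b).symm z).1) :=
    fun z => (hE 1 z).symm
  -- the arrow isomorphism between the fiber restrictions induced by E
  have earrow : ∀ x : Fin (T.chain.size 0), AIso (restr T x) (restr U (E 2 x)) := by
    intro x
    refine ⟨Equiv.subtypeEquiv (E 0) (fun z => ?_), Equiv.subtypeEquiv (E 1) (fun z => ?_),
      fun z => Subtype.ext (hE 0 z.1)⟩
    · exact ⟨fun hz => hz ▸ key z, fun hz => (E 2).injective ((key z).symm.trans hz)⟩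
    · exact ⟨fun hz => hz ▸ key1 z, fun hz => (E 2).injective ((key1 z).symm.trans hz)⟩
  have tarrow : ∀ x : Fin (T.chain.size 0),
      AIso ((T.tame x).f) ((U.tame (E 2 x)).f) :=
    fun x => ((tameArrow T x).trans (earrow x)).trans (tameArrow U (E 2 x)).symm
  refine ⟨fun i => E (i+2), fun i x => hE (i+2) x, ?_, ?_⟩
  · intro x
    show U.mult (E 2 x) = T.mult x
    obtain ⟨p, q, hpq⟩ := tarrow x
    have hcard : (T.tame x).a = (U.tame (E 2 x)).a := by
      simpa using Fintype.card_congr p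
    rw [← a_eq hT x, ← a_eq hU (E 2 x), hcard]
  · intro x
    show (T.tame x).Iso (U.tame (E 2 x))
    obtain ⟨p, q, hpq⟩ := tarrow x
    exact ⟨p, q, hpq, fun u => by rw [hU (E 2 x) (p u), hT x u]⟩

end Aux4

section Aux5

variable {k n : ℕ}

lemma iso_refl (c : FChain k n) : c.Iso c := ⟨fun _ => Equiv.refl _, fun _ _ => rfl⟩

lemma iso_symm {c d : FChain k n} (h : c.Iso d) : d.Iso c := by
  obtain ⟨e, he⟩ := h
  refine ⟨fun i => (e i).symm, fun i x => (e (i+1)).injective ?_⟩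
  rw [Equiv.apply_symm_apply, he, Equiv.apply_symm_apply]

lemma iso_trans {c d b : FChain k n} (h1 : c.Iso d) (h2 : d.Iso b) : c.Iso b := by
  obtain ⟨e, he⟩ := h1; obtain ⟨f, hf⟩ := h2
  exact ⟨fun i => (e i).trans (f i), fun i x => by
    simp only [Equiv.trans_apply, he, hf]⟩

end Aux5


/-- For n, k ≥ 1, the number of isomorphism classes of rank-n semisimple
untwisted extended fission trees of slope k equals φ(k+2,n). -/
theorem count_semisimple_extended_fission_trees (k n : ℕ) (hk : 1 ≤ k) (hn : 1 ≤ n) :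
    Nat.card (Quot (fun T U : {T : EFT k n // T.Semisimple} => T.1.Iso U.1)) =
      phi (k+2) n := by
  classical
  set r1 := fun T U : {T : EFT k n // T.Semisimple} => T.1.Iso U.1 with hr1
  set r2 := fun c d : {c : FChain (k+2) n // c.ExactSlope} => c.1.Iso d.1 with hr2
  have heq : Equivalence r2 :=
    ⟨fun c => iso_refl c.1, fun h => iso_symm h, fun h1 h2 => iso_trans h1 h2⟩
  let FF : {T : EFT k n // T.Semisimple} → {c : FChain (k+2) n // c.ExactSlope} :=
    fun T => ⟨Fc T.1 T.2, Fc_exact T.1 T.2 hk⟩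
  let q : Quot r1 → Quot r2 :=
    Quot.map FF (fun T U h => Fc_iso_of_iso T.2 U.2 h)
  have hsurj : Function.Surjective q := by
    intro y
    induction y using Quot.ind with
    | _ c =>
      exact ⟨Quot.mk _ ⟨Gc c.1 c.2 hk, Gc_ss c.1 c.2 hk⟩,
        Quot.sound (FGc_iso c.1 c.2 hk)⟩
  have hinj : Function.Injective q := by
    intro a b hab
    induction a using Quot.ind with
    | _ a =>
      induction b using Quot.ind with
      | _ b =>
        have h2 : Relation.EqvGen r2 (FF a) (FF b) := Quot.eq.mp hab
        have h3 : (Fc a.1 a.2).Iso (Fc b.1 b.2) := heq.eqvGen_iff.mp h2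
        exact Quot.sound (iso_of_Fc_iso a.2 b.2 h3)
  exact Nat.card_congr (Equiv.ofBijective q ⟨hinj, hsurj⟩)
end

section
/- For every integer n ≥ 1, the number of isomorphism classes of rank-n untwisted extended fission trees of slope 0 equals Φ(3,n), the number of finite multisets of nonzero integer partitions with total sum n; and the number of semisimple ones among them equals p(n). -/
/-! ### Auxiliary machinery -/

noncomputable section AuxFission

attribute [local instance] Classical.propDecidable

open Finset

section CountLemmas

variable {A : Type*} {B : Type*} {γ : Type*}

lemma count_univ_map [Fintype A] [DecidableEq γ] (u : A → γ) (c : γ) :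
    Multiset.count c (Finset.univ.val.map u) = Nat.card {x : A // u x = c} := by
  rw [Multiset.count_map, Nat.card_eq_fintype_card, Fintype.card_subtype, Finset.card,
    Finset.filter_val]
  congr 1
  exact Multiset.filter_congr (fun x _ => eq_comm)

lemma univ_map_eq_iff [Fintype A] [Fintype B] [DecidableEq γ] (u : A → γ) (v : B → γ) :
    Finset.univ.val.map u = Finset.univ.val.map v ↔
      ∀ c, Nat.card {x : A // u x = c} = Nat.card {y : B // v y = c} := by
  constructor
  · intro h c; rw [← count_univ_map, ← count_univ_map, h]
  · intro h
    refine Multiset.ext.mpr fun c => ?_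
    rw [count_univ_map, count_univ_map]; exact h c

lemma exists_equiv_fiber [Fintype A] [Fintype B] (u : A → γ) (v : B → γ)
    (h : ∀ c, Nat.card {x : A // u x = c} = Nat.card {y : B // v y = c}) :
    ∃ e : A ≃ B, ∀ x, v (e x) = u x := by
  have E : ∀ c, {x : A // u x = c} ≃ {y : B // v y = c} := fun c =>
    Fintype.equivOfCardEq (by
      rw [← Nat.card_eq_fintype_card, ← Nat.card_eq_fintype_card]; exact h c)
  refine ⟨(Equiv.sigmaFiberEquiv u).symm.trans
    ((Equiv.sigmaCongrRight E).trans (Equiv.sigmaFiberEquiv v)), fun x => ?_⟩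
  exact (E (u x) ⟨x, rfl⟩).2

lemma fiber_card_of_equiv (u : A → γ) (v : B → γ) (e : A ≃ B)
    (he : ∀ x, v (e x) = u x) (c : γ) :
    Nat.card {x : A // u x = c} = Nat.card {y : B // v y = c} :=
  Nat.card_congr (e.subtypeEquiv (fun x => by rw [← he x]))

lemma univ_map_equiv [Fintype A] [Fintype B] (β : A ≃ B) (g : A → γ) (g' : B → γ)
    (h : ∀ j, g' (β j) = g j) : Finset.univ.val.map g = Finset.univ.val.map g' := by
  have h2 := congrArg Finset.val (Finset.map_univ_equiv β)
  rw [Finset.map_val] at h2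
  calc Finset.univ.val.map g
      = Finset.univ.val.map (fun j => g' (β j)) :=
        Multiset.map_congr rfl (fun j _ => (h j).symm)
    _ = (Finset.univ.val.map β).map g' := by rw [Multiset.map_map]; rfl
    _ = Finset.univ.val.map g' := by
        simp only [Equiv.coe_toEmbedding] at h2; rw [h2]

lemma count_filter_map [Fintype A] (p : A → Prop) [DecidablePred p] (μ : A → ℕ) (m : ℕ) :
    Multiset.count m ((Finset.univ.val.filter p).map μ) = Nat.card {x : A // p x ∧ μ x = m} := by
  rw [Multiset.count_map]
  have h1 : Multiset.filter (fun a => m = μ a) (Finset.univ.val.filter p)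
      = Multiset.filter (fun x => p x ∧ μ x = m) Finset.univ.val := by
    rw [Multiset.filter_filter]
    exact Multiset.filter_congr (fun x _ => by
      constructor
      · rintro ⟨h1, h2⟩; exact ⟨h2, h1.symm⟩
      · rintro ⟨h1, h2⟩; exact ⟨h2.symm, h1⟩)
  rw [h1, Nat.card_eq_fintype_card, Fintype.card_subtype, Finset.card, Finset.filter_val]

lemma exists_enum (s : Multiset γ) :
    ∃ g : Fin (Multiset.card s) → γ, Finset.univ.val.map g = s := by
  induction s using Quotient.inductionOn with
  | h l =>
    refine ⟨l.get, ?_⟩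
    change Multiset.map l.get (Finset.univ.val : Multiset (Fin l.length)) = (l : Multiset γ)
    have h1 : Multiset.map l.get (Finset.univ.val : Multiset (Fin l.length))
        = ((List.finRange l.length).map l.get : List γ) := rfl
    rw [h1, ← List.ofFn_eq_map, List.ofFn_get]

end CountLemmas

section SigmaFibers

variable {b A : ℕ} (c : Fin b → ℕ)

/-- Fibers of the first projection through an equivalence with a sigma type. -/
def sigmaCondEquiv (j : Fin b) :
    {σ : Σ j' : Fin b, Fin (c j') // σ.1 = j} ≃ Fin (c j) where
  toFun σ := Fin.cast (congrArg c σ.2) σ.1.2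
  invFun y := ⟨⟨j, y⟩, rfl⟩
  left_inv := by rintro ⟨⟨j', y⟩, rfl⟩; rfl
  right_inv y := rfl

def sigmaCondEquiv₂ (w : ∀ j, Fin (c j) → ℕ) (j : Fin b) (m : ℕ) :
    {σ : Σ j' : Fin b, Fin (c j') // σ.1 = j ∧ w σ.1 σ.2 = m} ≃ {y : Fin (c j) // w j y = m} where
  toFun σ := ⟨Fin.cast (congrArg c σ.2.1) σ.1.2, by
    obtain ⟨⟨j', y⟩, rfl, h2⟩ := σ; exact h2⟩
  invFun y := ⟨⟨j, y.1⟩, rfl, y.2⟩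
  left_inv := by rintro ⟨⟨j', y⟩, rfl, h2⟩; rfl
  right_inv y := rfl

lemma mk_fiber_card (E : (Σ j, Fin (c j)) ≃ Fin A) (j : Fin b) :
    Nat.card {x : Fin A // (E.symm x).1 = j} = c j := by
  have e1 : {σ : Σ j', Fin (c j') // σ.1 = j} ≃ {x : Fin A // (E.symm x).1 = j} :=
    E.subtypeEquiv (fun σ => by rw [Equiv.symm_apply_apply])
  calc Nat.card {x : Fin A // (E.symm x).1 = j}
      = Nat.card {σ : Σ j', Fin (c j') // σ.1 = j} := (Nat.card_congr e1).symm
    _ = Nat.card (Fin (c j)) := Nat.card_congr (sigmaCondEquiv c j)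
    _ = c j := by simp

lemma mk_fiber_count (E : (Σ j, Fin (c j)) ≃ Fin A) (w : ∀ j, Fin (c j) → ℕ)
    (j : Fin b) (m : ℕ) :
    Nat.card {x : Fin A // (E.symm x).1 = j ∧ w (E.symm x).1 (E.symm x).2 = m}
      = Nat.card {y : Fin (c j) // w j y = m} := by
  have e1 : {σ : Σ j', Fin (c j') // σ.1 = j ∧ w σ.1 σ.2 = m}
      ≃ {x : Fin A // (E.symm x).1 = j ∧ w (E.symm x).1 (E.symm x).2 = m} :=
    E.subtypeEquiv (fun σ => by rw [Equiv.symm_apply_apply])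
  rw [← Nat.card_congr e1]
  exact Nat.card_congr (sigmaCondEquiv₂ c w j m)

end SigmaFibers

/-- The classifying objects: nonzero partitions. -/
abbrev PBlock := {q : Σ m : ℕ, Nat.Partition m // q.1 ≠ 0}

lemma sigma_partition_ext {p q : Σ m : ℕ, Nat.Partition m} (h : p.2.parts = q.2.parts) :
    p = q := by
  obtain ⟨a, pa⟩ := p; obtain ⟨b, qb⟩ := q
  dsimp at h
  have hab : a = b := by rw [← pa.parts_sum, ← qb.parts_sum, h]
  subst hab
  congr 1
  exact Nat.Partition.ext h

namespace Tame

variable {n m : ℕ}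

def fiberμ (t : Tame n) (j : Fin t.b) : Multiset ℕ :=
  (Finset.univ.val.filter (fun x => t.f x = j)).map t.μ

lemma count_fiberμ (t : Tame n) (j : Fin t.b) (m : ℕ) :
    Multiset.count m (t.fiberμ j) = Nat.card {x // t.f x = j ∧ t.μ x = m} :=
  count_filter_map _ _ _

lemma fiberμ_pos (t : Tame n) (j : Fin t.b) : ∀ i ∈ t.fiberμ j, 0 < i := by
  intro i hi
  obtain ⟨x, _, rfl⟩ := Multiset.mem_map.mp hi
  exact t.μ_pos x

lemma mem_fiberμ_self (t : Tame n) (x : Fin t.a) : t.μ x ∈ t.fiberμ (t.f x) :=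
  Multiset.mem_map.mpr ⟨x, Multiset.mem_filter.mpr ⟨Finset.mem_univ x, rfl⟩, rfl⟩

lemma fiberμ_sum_ne (t : Tame n) (j : Fin t.b) : (t.fiberμ j).sum ≠ 0 := by
  obtain ⟨x, rfl⟩ := t.surj j
  have h1 : t.μ x ≤ (t.fiberμ (t.f x)).sum :=
    Multiset.single_le_sum (fun y _ => Nat.zero_le y) _ (t.mem_fiberμ_self x)
  have := t.μ_pos x
  omega

def block (t : Tame n) (j : Fin t.b) : PBlock :=
  ⟨⟨(t.fiberμ j).sum, ⟨t.fiberμ j, fun {i} hi => t.fiberμ_pos j i hi, rfl⟩⟩, t.fiberμ_sum_ne j⟩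

lemma block_parts (t : Tame n) (j : Fin t.b) : (t.block j).1.2.parts = t.fiberμ j := rfl

lemma block_eq_of {t : Tame n} {u : Tame m} {j : Fin t.b} {j' : Fin u.b}
    (h : t.fiberμ j = u.fiberμ j') : t.block j = u.block j' :=
  Subtype.ext (sigma_partition_ext h)

lemma fiberμ_of_block {t : Tame n} {u : Tame m} {j : Fin t.b} {j' : Fin u.b}
    (h : t.block j = u.block j') : t.fiberμ j = u.fiberμ j' :=
  congrArg (fun q => q.1.2.parts) h

def inv (t : Tame n) : Multiset PBlock := Finset.univ.val.map t.block

lemma fiberμ_finset_sum (t : Tame n) (j : Fin t.b) :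
    (t.fiberμ j).sum = ∑ i ∈ Finset.univ.filter (fun x => t.f x = j), t.μ i := rfl

lemma inv_sum (t : Tame n) : ((t.inv).map fun q => q.1.1).sum = n := by
  rw [inv, Multiset.map_map]
  have h1 : (Finset.univ.val.map ((fun q : PBlock => q.1.1) ∘ t.block)).sum
      = ∑ j, (t.fiberμ j).sum := rfl
  rw [h1]
  simp only [fiberμ_finset_sum]
  rw [Finset.sum_fiberwise Finset.univ t.f t.μ]
  exact t.μ_sum

lemma fiberμ_congr {t : Tame n} {u : Tame m} (α : Fin t.a ≃ Fin u.a) (β : Fin t.b ≃ Fin u.b)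
    (hf : ∀ x, β (t.f x) = u.f (α x)) (hμ : ∀ x, u.μ (α x) = t.μ x) (j : Fin t.b) :
    u.fiberμ (β j) = t.fiberμ j := by
  refine Multiset.ext.mpr fun m => ?_
  rw [count_fiberμ, count_fiberμ]
  refine (Nat.card_congr (α.subtypeEquiv (fun x => ?_))).symm
  rw [← hf x, hμ x, β.apply_eq_iff_eq]

lemma inv_iso {t : Tame n} {u : Tame m} (h : t.Iso u) : t.inv = u.inv := by
  obtain ⟨α, β, hf, hμ⟩ := h
  exact univ_map_equiv β t.block u.block
    (fun j => block_eq_of (fiberμ_congr α β hf hμ j))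

lemma iso_of_inv {t : Tame n} {u : Tame m} (h : t.inv = u.inv) : t.Iso u := by
  obtain ⟨β, hβ⟩ := exists_equiv_fiber t.block u.block ((univ_map_eq_iff _ _).mp h)
  have hfib : ∀ j, u.fiberμ (β j) = t.fiberμ j :=
    fun j => fiberμ_of_block (hβ j)
  have hcard : ∀ p : Fin u.b × ℕ, Nat.card {x // (β (t.f x), t.μ x) = p}
      = Nat.card {y // (u.f y, u.μ y) = p} := by
    intro p
    have l1 : Nat.card {x // (β (t.f x), t.μ x) = p}
        = Nat.card {x // t.f x = β.symm p.1 ∧ t.μ x = p.2} :=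
      Nat.card_congr (Equiv.subtypeEquivRight (fun x => by
        rw [Prod.ext_iff]; simp only
        constructor
        · rintro ⟨h1, h2⟩; exact ⟨by rw [← h1, Equiv.symm_apply_apply], h2⟩
        · rintro ⟨h1, h2⟩; exact ⟨by rw [h1, Equiv.apply_symm_apply], h2⟩))
    have l2 : Nat.card {y // (u.f y, u.μ y) = p}
        = Nat.card {y // u.f y = p.1 ∧ u.μ y = p.2} :=
      Nat.card_congr (Equiv.subtypeEquivRight (fun y => by rw [Prod.ext_iff]))
    rw [l1, l2, ← count_fiberμ, ← count_fiberμ, ← hfib (β.symm p.1),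
      Equiv.apply_symm_apply]
  obtain ⟨α, hα⟩ := exists_equiv_fiber (fun x => (β (t.f x), t.μ x))
      (fun y => (u.f y, u.μ y)) hcard
  exact ⟨α, β, fun x => (congrArg Prod.fst (hα x)).symm,
    fun x => congrArg Prod.snd (hα x)⟩

def mkTame {n : ℕ} (b A : ℕ) (c : Fin b → ℕ) (w : ∀ j, Fin (c j) → ℕ)
    (E : (Σ j, Fin (c j)) ≃ Fin A)
    (hc : ∀ j, 1 ≤ c j) (hw : ∀ j i, 1 ≤ w j i)
    (hsum : ∑ σ : Σ j, Fin (c j), w σ.1 σ.2 = n) : Tame n where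
  a := A
  b := b
  f x := (E.symm x).1
  surj j := ⟨E ⟨j, ⟨0, hc j⟩⟩, by simp⟩
  μ x := w (E.symm x).1 (E.symm x).2
  μ_pos x := hw _ _
  μ_sum := by
    rw [← hsum]
    exact Equiv.sum_comp E.symm (fun σ : Σ j, Fin (c j) => w σ.1 σ.2)

lemma mkTame_fiberμ {n : ℕ} (b A : ℕ) (c : Fin b → ℕ) (w : ∀ j, Fin (c j) → ℕ)
    (E : (Σ j, Fin (c j)) ≃ Fin A) (hc : ∀ j, 1 ≤ c j) (hw : ∀ j i, 1 ≤ w j i)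
    (hsum : ∑ σ : Σ j, Fin (c j), w σ.1 σ.2 = n) (j : Fin b) :
    (mkTame b A c w E hc hw hsum).fiberμ j = Finset.univ.val.map (w j) := by
  refine Multiset.ext.mpr fun m => ?_
  refine (count_fiberμ (mkTame b A c w E hc hw hsum) j m).trans ?_
  rw [count_univ_map]
  exact mk_fiber_count c E w j m

lemma mkTame_fibcard {n : ℕ} (b A : ℕ) (c : Fin b → ℕ) (w : ∀ j, Fin (c j) → ℕ)
    (E : (Σ j, Fin (c j)) ≃ Fin A) (hc : ∀ j, 1 ≤ c j) (hw : ∀ j i, 1 ≤ w j i)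
    (hsum : ∑ σ : Σ j, Fin (c j), w σ.1 σ.2 = n) (j : Fin b) :
    Nat.card {x // (mkTame b A c w E hc hw hsum).f x = j} = c j :=
  mk_fiber_card c E j

lemma exists_tame {n : ℕ} (M : Multiset PBlock)
    (hM : (M.map fun q => q.1.1).sum = n) : ∃ t : Tame n, t.inv = M := by
  obtain ⟨P, hP⟩ := exists_enum M
  choose w hw using fun j => exists_enum ((P j).1.2.parts)
  set c : Fin (Multiset.card M) → ℕ := fun j => Multiset.card ((P j).1.2.parts) with hc_def
  have hc : ∀ j, 1 ≤ c j := by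
    intro j
    refine Nat.one_le_iff_ne_zero.mpr fun h0 => (P j).2 ?_
    rw [← (P j).1.2.parts_sum, Multiset.card_eq_zero.mp h0, Multiset.sum_zero]
  have hwpos : ∀ j i, 1 ≤ w j i := by
    intro j i
    refine (P j).1.2.parts_pos ?_
    rw [← hw j]
    exact Multiset.mem_map_of_mem _ (Finset.mem_univ i)
  have hsum : ∑ σ : Σ j, Fin (c j), w σ.1 σ.2 = n := by
    rw [← Finset.univ_sigma_univ, Finset.sum_sigma]
    have h1 : ∀ j, ∑ i, w j i = (P j).1.1 := by
      intro j
      have : ∑ i, w j i = (Finset.univ.val.map (w j)).sum := rfl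
      rw [this, hw j, (P j).1.2.parts_sum]
    refine (Finset.sum_congr rfl (fun j _ => h1 j)).trans ?_
    have h2 : ∑ j, (P j).1.1 = ((Finset.univ.val.map P).map fun q => q.1.1).sum := by
      rw [Multiset.map_map]; rfl
    rw [h2, hP, hM]
  refine ⟨mkTame (Multiset.card M) (∑ j, c j) c w
    (Fintype.equivOfCardEq (by simp)) hc hwpos hsum, ?_⟩
  show Multiset.map _ Finset.univ.val = M
  refine (Multiset.map_congr rfl (fun j _ => ?_)).trans hP
  refine Subtype.ext (sigma_partition_ext ?_)
  show (mkTame _ _ c w _ _ _ _).fiberμ j = (P j).1.2.parts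
  exact (mkTame_fiberμ _ _ c w _ _ _ _ j).trans (hw j)

/-! Semisimple invariant -/

def ssfib (t : Tame n) : Multiset ℕ :=
  Finset.univ.val.map (fun j => Nat.card {x // t.f x = j})

lemma ssfib_pos (t : Tame n) : ∀ i ∈ t.ssfib, 0 < i := by
  intro i hi
  obtain ⟨j, _, rfl⟩ := Multiset.mem_map.mp hi
  obtain ⟨x, hx⟩ := t.surj j
  haveI : Nonempty {x // t.f x = j} := ⟨⟨x, hx⟩⟩
  exact Nat.card_pos

lemma ssfib_sum (t : Tame n) (h : t.Semisimple) : t.ssfib.sum = n := by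
  have h1 : t.ssfib.sum = ∑ j, Nat.card {x // t.f x = j} := rfl
  rw [h1]
  simp only [Nat.card_eq_fintype_card]
  rw [← Fintype.card_sigma, Fintype.card_congr (Equiv.sigmaFiberEquiv t.f),
    Fintype.card_fin]
  have h2 : t.a = ∑ i, t.μ i := by
    rw [Finset.sum_congr rfl (fun i _ => h i)]
    simp
  rw [h2, t.μ_sum]

lemma ssfib_iso {t : Tame n} {u : Tame m} (h : t.Iso u) : t.ssfib = u.ssfib := by
  obtain ⟨α, β, hf, hμ⟩ := h
  refine univ_map_equiv β _ _ (fun j => ?_)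
  refine (Nat.card_congr (α.subtypeEquiv (fun x => ?_))).symm
  rw [← hf x, β.apply_eq_iff_eq]

lemma ss_iso_of {t : Tame n} {u : Tame m} (ht : t.Semisimple) (hu : u.Semisimple)
    (h : t.ssfib = u.ssfib) : t.Iso u := by
  obtain ⟨β, hβ⟩ := exists_equiv_fiber (fun j => Nat.card {x // t.f x = j})
    (fun j => Nat.card {y // u.f y = j}) ((univ_map_eq_iff _ _).mp h)
  have hcard : ∀ j, Nat.card {x // β (t.f x) = j} = Nat.card {y // u.f y = j} := by
    intro j
    have l1 : Nat.card {x // β (t.f x) = j} = Nat.card {x // t.f x = β.symm j} :=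
      Nat.card_congr (Equiv.subtypeEquivRight fun x =>
        Equiv.apply_eq_iff_eq_symm_apply β)
    rw [l1, ← hβ (β.symm j), Equiv.apply_symm_apply]
  obtain ⟨α, hα⟩ := exists_equiv_fiber (fun x => β (t.f x)) u.f hcard
  exact ⟨α, β, fun x => (hα x).symm, fun x => by rw [hu _, ht _]⟩

lemma exists_ss {n : ℕ} (p : Nat.Partition n) :
    ∃ t : Tame n, t.Semisimple ∧ t.ssfib = p.parts := by
  obtain ⟨w, hw⟩ := exists_enum p.parts
  have hc : ∀ j, 1 ≤ w j := by
    intro j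
    refine p.parts_pos ?_
    rw [← hw]
    exact Multiset.mem_map_of_mem _ (Finset.mem_univ j)
  have hsum : ∑ σ : Σ j, Fin (w j), (fun (j : Fin (Multiset.card p.parts))
      (_ : Fin (w j)) => 1) σ.1 σ.2 = n := by
    rw [← Finset.univ_sigma_univ, Finset.sum_sigma]
    simp only [Finset.sum_const, smul_eq_mul, mul_one, Finset.card_univ, Fintype.card_fin]
    have : ∑ j, w j = (Finset.univ.val.map w).sum := rfl
    rw [this, hw, p.parts_sum]
  refine ⟨mkTame (Multiset.card p.parts) (∑ j, w j) w (fun j _ => 1)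
    (Fintype.equivOfCardEq (by simp)) hc (fun _ _ => le_refl 1) hsum,
    fun x => rfl, ?_⟩
  show Multiset.map _ Finset.univ.val = p.parts
  exact (Multiset.map_congr rfl
    (fun j _ => mkTame_fibcard _ _ _ _ _ _ _ _ j)).trans hw

lemma b_pos (t : Tame n) (hn : 1 ≤ n) : 0 < t.b := by
  rcases Nat.eq_zero_or_pos t.a with h | h
  · exfalso
    have hs := t.μ_sum
    haveI : IsEmpty (Fin t.a) := by rw [h]; infer_instance
    rw [Finset.univ_eq_empty, Finset.sum_empty] at hs
    omega
  · exact (t.f ⟨0, h⟩).pos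

end Tame

namespace FChain

variable {k n : ℕ}

lemma size_eq_one (c : FChain k n) : ∀ i, k ≤ i → c.size i = 1 := by
  intro i hi
  induction i, hi using Nat.le_induction with
  | base => exact c.size_top
  | succ i hi ih =>
    have x0 : Fin (c.size i) := by rw [ih]; exact 0
    have h1 : 0 < c.size (i+1) := (c.map i x0).pos
    have h2 : c.size (i+1) ≤ c.size i := by
      have := Fintype.card_le_of_surjective (c.map i) (c.surj i)
      simpa using this
    omega

def toTame (c : FChain 3 n) : Tame n where
  a := c.size 1
  b := c.size 2
  f := c.map 1
  surj := c.surj 1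
  μ j := Nat.card {x // c.map 0 x = j}
  μ_pos j := by
    obtain ⟨x, hx⟩ := c.surj 0 j
    haveI : Nonempty {y // c.map 0 y = j} := ⟨⟨x, hx⟩⟩
    exact Nat.card_pos
  μ_sum := by
    have h1 := Fintype.card_congr (Equiv.sigmaFiberEquiv (c.map 0))
    rw [Fintype.card_sigma] at h1
    simpa [Nat.card_eq_fintype_card, c.size_zero] using h1

def invC (c : FChain 3 n) : Multiset PBlock := c.toTame.inv

lemma invC_sum (c : FChain 3 n) : ((c.invC).map fun q => q.1.1).sum = n :=
  Tame.inv_sum c.toTame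

lemma toTame_iso {c d : FChain 3 n} (h : c.Iso d) : c.toTame.Iso d.toTame := by
  obtain ⟨e, he⟩ := h
  refine ⟨e 1, e 2, fun x => he 1 x, fun j => ?_⟩
  refine (Nat.card_congr ((e 0).subtypeEquiv (fun x => ?_))).symm
  have h01 : e 1 (c.map 0 x) = d.map 0 (e 0 x) := he 0 x
  rw [← h01]
  exact (Equiv.apply_eq_iff_eq (e 1)).symm

lemma iso_of_toTame {c d : FChain 3 n} (h : c.toTame.Iso d.toTame) : c.Iso d := by
  obtain ⟨α, β, hf, hμ⟩ := h
  have hcard : ∀ y, Nat.card {x // α (c.map 0 x) = y}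
      = Nat.card {x' // d.map 0 x' = y} := by
    intro y
    have l1 : Nat.card {x // α (c.map 0 x) = y} = Nat.card {x // c.map 0 x = α.symm y} :=
      Nat.card_congr (Equiv.subtypeEquivRight fun x =>
        Equiv.apply_eq_iff_eq_symm_apply α)
    have l2 := hμ (α.symm y)
    rw [Equiv.apply_symm_apply] at l2
    rw [l1]
    exact l2.symm
  obtain ⟨e0, he0⟩ := exists_equiv_fiber (fun x => α (c.map 0 x)) (d.map 0) hcard
  · refine ⟨fun i => match i with
      | 0 => e0
      | 1 => α
      | 2 => β
      | (i+3) => finCongr (by rw [c.size_eq_one (i+3) (by omega),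
          d.size_eq_one (i+3) (by omega)])
      , fun i x => ?_⟩
    match i with
    | 0 => exact (he0 x).symm
    | 1 => exact hf x
    | (i+2) =>
      haveI : Subsingleton (Fin (d.size (i+2+1))) := by
        rw [d.size_eq_one (i+2+1) (by omega)]
        infer_instance
      exact Subsingleton.elim _ _

end FChain

namespace Tame

def sigEquiv {n : ℕ} (t : Tame n) : (Σ j : Fin t.a, Fin (t.μ j)) ≃ Fin n :=
  Fintype.equivOfCardEq (by simp [t.μ_sum])

def toChain {n : ℕ} (t : Tame n) (hb : 0 < t.b) : FChain 3 n where
  size := fun i => match i with | 0 => n | 1 => t.a | 2 => t.b | _+3 => 1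
  map := fun i => match i with
    | 0 => fun x => (t.sigEquiv.symm x).1
    | 1 => t.f
    | 2 => fun _ => (0 : Fin 1)
    | _+3 => id
  surj := fun i => match i with
    | 0 => fun j => ⟨t.sigEquiv ⟨j, ⟨0, t.μ_pos j⟩⟩, by simp⟩
    | 1 => t.surj
    | 2 => fun y => ⟨⟨0, hb⟩, Subsingleton.elim _ _⟩
    | _+3 => Function.surjective_id
  size_zero := rfl
  size_top := rfl

lemma toChain_toTame_iso {n : ℕ} (t : Tame n) (hb : 0 < t.b) :
    (t.toChain hb).toTame.Iso t :=
  ⟨Equiv.refl _, Equiv.refl _, fun _ => rfl,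
    fun j => (mk_fiber_card t.μ t.sigEquiv j).symm⟩

end Tame

lemma exists_chain {n : ℕ} (M : Multiset PBlock)
    (hM : (M.map fun q => q.1.1).sum = n) (hn : 1 ≤ n) :
    ∃ ch : FChain 3 n, ch.invC = M := by
  obtain ⟨t, ht⟩ := Tame.exists_tame M hM
  refine ⟨t.toChain (t.b_pos hn), ?_⟩
  rw [FChain.invC, Tame.inv_iso (Tame.toChain_toTame_iso t (t.b_pos hn))]
  exact ht

namespace EFT

variable {n : ℕ}

lemma size0 (T : EFT 0 n) : T.chain.size 0 = 1 := T.chain.size_top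

def i0 (T : EFT 0 n) : Fin (T.chain.size 0) := ⟨0, by rw [T.size0]; exact one_pos⟩

lemma subsing (T : EFT 0 n) : Subsingleton (Fin (T.chain.size 0)) := by
  rw [T.size0]; infer_instance

lemma mult_eq (T : EFT 0 n) (x : Fin (T.chain.size 0)) : T.mult x = n := by
  have h := T.mult_sum
  haveI := T.subsing
  rwa [Fintype.sum_subsingleton _ x] at h

def gE (T : EFT 0 n) : Multiset PBlock := (T.tame T.i0).inv

lemma gE_sum (T : EFT 0 n) : ((T.gE).map fun q => q.1.1).sum = n :=
  (Tame.inv_sum _).trans (T.mult_eq T.i0)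

lemma tame_iso_any {T U : EFT 0 n} (h : (T.tame T.i0).Iso (U.tame U.i0))
    (x : Fin (T.chain.size 0)) (y : Fin (U.chain.size 0)) :
    (T.tame x).Iso (U.tame y) := by
  haveI := T.subsing
  haveI := U.subsing
  rw [Subsingleton.elim x T.i0, Subsingleton.elim y U.i0]
  exact h

lemma gE_iso {T U : EFT 0 n} (h : T.Iso U) : T.gE = U.gE := by
  obtain ⟨e, _, _, htame⟩ := h
  have h1 := Tame.inv_iso (htame T.i0)
  haveI := U.subsing
  rwa [Subsingleton.elim (e 0 T.i0) U.i0] at h1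

lemma iso_of_gE {T U : EFT 0 n} (h : T.gE = U.gE) : T.Iso U := by
  have hcs : ∀ i, T.chain.size i = 1 := fun i => T.chain.size_eq_one i (Nat.zero_le i)
  have hds : ∀ i, U.chain.size i = 1 := fun i => U.chain.size_eq_one i (Nat.zero_le i)
  refine ⟨fun i => finCongr ((hcs i).trans (hds i).symm), fun i x => ?_,
    fun x => ?_, fun x => ?_⟩
  · haveI : Subsingleton (Fin (U.chain.size (i+1))) := by rw [hds]; infer_instance
    exact Subsingleton.elim _ _
  · rw [U.mult_eq, T.mult_eq]
  · exact tame_iso_any (Tame.iso_of_inv h) x _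

def trivChain : FChain 0 1 :=
  ⟨fun _ => 1, fun _ => id, fun _ => Function.surjective_id, rfl, rfl⟩

lemma gE_surj {n : ℕ} (hn : 1 ≤ n) (M : Multiset PBlock)
    (hM : (M.map fun q => q.1.1).sum = n) : ∃ T : EFT 0 n, T.gE = M := by
  obtain ⟨t, ht⟩ := Tame.exists_tame M hM
  exact ⟨⟨1, trivChain, Or.inl rfl, fun _ => n, fun _ => hn, by show ∑ _ : Fin 1, n = n; simp, fun _ => t⟩, ht⟩

/-! semisimple classification -/

def gS (T : EFT 0 n) (hT : T.Semisimple) : Nat.Partition n where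
  parts := (T.tame T.i0).ssfib
  parts_pos := fun {i} hi => Tame.ssfib_pos _ i hi
  parts_sum := (Tame.ssfib_sum _ (hT T.i0)).trans (T.mult_eq T.i0)

lemma gS_iso {T U : EFT 0 n} (hT : T.Semisimple) (hU : U.Semisimple)
    (h : T.Iso U) : T.gS hT = U.gS hU := by
  refine Nat.Partition.ext ?_
  obtain ⟨e, _, _, htame⟩ := h
  have h1 := Tame.ssfib_iso (htame T.i0)
  haveI := U.subsing
  rwa [Subsingleton.elim (e 0 T.i0) U.i0] at h1

lemma iso_of_gS {T U : EFT 0 n} (hT : T.Semisimple) (hU : U.Semisimple)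
    (h : T.gS hT = U.gS hU) : T.Iso U := by
  have hparts : (T.tame T.i0).ssfib = (U.tame U.i0).ssfib := congrArg Nat.Partition.parts h
  have hcs : ∀ i, T.chain.size i = 1 := fun i => T.chain.size_eq_one i (Nat.zero_le i)
  have hds : ∀ i, U.chain.size i = 1 := fun i => U.chain.size_eq_one i (Nat.zero_le i)
  refine ⟨fun i => finCongr ((hcs i).trans (hds i).symm), fun i x => ?_,
    fun x => ?_, fun x => ?_⟩
  · haveI : Subsingleton (Fin (U.chain.size (i+1))) := by rw [hds]; infer_instance
    exact Subsingleton.elim _ _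
  · rw [U.mult_eq, T.mult_eq]
  · exact tame_iso_any (Tame.ss_iso_of (hT T.i0) (hU U.i0) hparts) x _

lemma gS_surj {n : ℕ} (hn : 1 ≤ n) (p : Nat.Partition n) :
    ∃ T : EFT 0 n, ∃ hT : T.Semisimple, T.gS hT = p := by
  obtain ⟨t, hss, hfib⟩ := Tame.exists_ss p
  refine ⟨⟨1, trivChain, Or.inl rfl, fun _ => n, fun _ => hn, by show ∑ _ : Fin 1, n = n; simp, fun _ => t⟩,
    fun _ => hss, ?_⟩
  exact Nat.Partition.ext hfib

end EFT

lemma card_quot_eq {A : Type*} {B : Type*} (r : A → A → Prop) (g : A → B)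
    (h1 : ∀ a b, r a b → g a = g b) (h2 : ∀ a b, g a = g b → r a b)
    (h3 : Function.Surjective g) : Nat.card (Quot r) = Nat.card B := by
  refine Nat.card_eq_of_bijective (Quot.lift g h1) ⟨?_, ?_⟩
  · intro x y h
    induction x using Quot.ind with | mk a =>
    induction y using Quot.ind with | mk b =>
    exact Quot.sound (h2 a b h)
  · intro b
    obtain ⟨a, rfl⟩ := h3 b
    exact ⟨Quot.mk r a, rfl⟩

end AuxFission


/-- For n ≥ 1, the number of isomorphism classes of rank-n untwisted extended
fission trees of slope 0 equals Φ(3,n), the number of finite multisets of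
nonzero integer partitions with total sum n; and the number of semisimple ones
among them equals p(n). -/
theorem count_slope_zero_extended_fission_trees (n : ℕ) (hn : 1 ≤ n) :
    Nat.card (Quot (fun T U : EFT 0 n => T.Iso U)) = PhiBig 3 n ∧
    Nat.card (Quot (fun T U : EFT 0 n => T.Iso U)) =
      Nat.card {M : Multiset {q : Σ m : ℕ, Nat.Partition m // q.1 ≠ 0} //
        (M.map (fun q => q.1.1)).sum = n} ∧
    Nat.card (Quot (fun T U : {T : EFT 0 n // T.Semisimple} => T.1.Iso U.1)) =
      Fintype.card (Nat.Partition n) := by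
  have key1 : Nat.card (Quot (fun T U : EFT 0 n => T.Iso U)) =
      Nat.card {M : Multiset PBlock // (M.map (fun q => q.1.1)).sum = n} := by
    refine card_quot_eq _ (fun T => ⟨T.gE, T.gE_sum⟩) ?_ ?_ ?_
    · intro T U h; exact Subtype.ext (EFT.gE_iso h)
    · intro T U h; exact EFT.iso_of_gE (congrArg Subtype.val h)
    · rintro ⟨M, hM⟩
      obtain ⟨T, hT⟩ := EFT.gE_surj hn M hM
      exact ⟨T, Subtype.ext hT⟩
  have key2 : PhiBig 3 n =
      Nat.card {M : Multiset PBlock // (M.map (fun q => q.1.1)).sum = n} := by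
    unfold PhiBig
    refine card_quot_eq _ (fun c : FChain 3 n =>
      (⟨c.invC, c.invC_sum⟩ : {M : Multiset PBlock // (M.map (fun q => q.1.1)).sum = n}))
      ?_ ?_ ?_
    · intro c d h; exact Subtype.ext (Tame.inv_iso (FChain.toTame_iso h))
    · intro c d h
      exact FChain.iso_of_toTame (Tame.iso_of_inv (congrArg Subtype.val h))
    · rintro ⟨M, hM⟩
      obtain ⟨c, hc⟩ := exists_chain M hM hn
      exact ⟨c, Subtype.ext hc⟩
  have key3 : Nat.card (Quot (fun T U : {T : EFT 0 n // T.Semisimple} => T.1.Iso U.1)) =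
      Nat.card (Nat.Partition n) := by
    refine card_quot_eq _ (fun T => T.1.gS T.2) ?_ ?_ ?_
    · intro T U h; exact EFT.gS_iso T.2 U.2 h
    · intro T U h; exact EFT.iso_of_gS T.2 U.2 h
    · intro p
      obtain ⟨T, hT, hp⟩ := EFT.gS_surj hn p
      exact ⟨⟨T, hT⟩, hp⟩
  exact ⟨key1.trans key2.symm, key1, key3.trans Nat.card_eq_fintype_card⟩
end

section
/- For every integer k ≥ 1, φ(k,4) = k²: there are exactly k² isomorphism classes of untwisted multiplicity-one fission trees (fission chains) of slope exactly k with 4 leaves. -/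
namespace FChain

variable {k n m l : ℕ}

lemma size_antitone (c : FChain k n) {i j : ℕ} (h : i ≤ j) : c.size j ≤ c.size i := by
  induction j, h using Nat.le_induction with
  | base => exact le_refl _
  | succ j hij ih =>
      have := Fintype.card_le_of_surjective _ (c.surj j)
      simp only [Fintype.card_fin] at this
      omega

lemma size_pos (c : FChain k n) {i : ℕ} (hi : i ≤ k) : 1 ≤ c.size i := by
  by_contra h
  have h0 : c.size i = 0 := by omega
  have key : ∀ d, c.size (i + d) = 0 := by
    intro d
    induction d with
    | zero => simpa using h0
    | succ d ih =>
        show c.size (i + d + 1) = 0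
        have := Fintype.card_le_of_surjective _ (c.surj (i + d))
        simp only [Fintype.card_fin] at this
        omega
  have := key (k - i)
  rw [show i + (k - i) = k by omega, c.size_top] at this
  omega

lemma size_one_of_ge (c : FChain k n) {i : ℕ} (hi : k ≤ i) : c.size i = 1 := by
  have key : ∀ d, c.size (k + d) = 1 := by
    intro d
    induction d with
    | zero => simpa using c.size_top
    | succ d ih =>
        show c.size (k + d + 1) = 1
        have h1 : c.size (k + d + 1) ≤ 1 := by
          have := Fintype.card_le_of_surjective _ (c.surj (k + d))
          simp only [Fintype.card_fin] at this; omega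
        have x0 : Fin (c.size (k + d)) := ⟨0, by omega⟩
        have h2 := (c.map (k + d) x0).isLt
        omega
  have := key (i - k)
  rwa [show k + (i - k) = i by omega] at this

/-- composite map from the leaves to level `i` -/
def F (c : FChain k n) : ∀ i, Fin n → Fin (c.size i)
  | 0 => fun x => finCongr c.size_zero.symm x
  | i+1 => fun x => c.map i (F c i x)

lemma F_surj (c : FChain k n) (i : ℕ) : Function.Surjective (c.F i) := by
  induction i with
  | zero => exact (finCongr c.size_zero.symm).surjective
  | succ i ih => exact (c.surj i).comp ih

lemma F_mono (c : FChain k n) {i j : ℕ} (h : i ≤ j) {x y : Fin n}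
    (hxy : c.F i x = c.F i y) : c.F j x = c.F j y := by
  induction j, h using Nat.le_induction with
  | base => exact hxy
  | succ j hij ih => simp only [F, ih]

lemma F_rev (c : FChain k n) {i j : ℕ} (h : i ≤ j) (hs : c.size i = c.size j)
    {x y : Fin n} (hxy : c.F j x = c.F j y) : c.F i x = c.F i y := by
  induction j, h using Nat.le_induction with
  | base => exact hxy
  | succ j hij ih =>
      have h1 : c.size (j+1) ≤ c.size j := c.size_antitone (Nat.le_succ j)
      have h2 : c.size j ≤ c.size i := c.size_antitone hij
      have hsz : c.size j = c.size (j+1) := by omega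
      have hinj : Function.Injective (c.map j) := by
        rw [Finite.injective_iff_surjective_of_equiv (finCongr hsz)]
        exact c.surj j
      exact ih (by omega) (hinj hxy)

lemma F_inj (c : FChain k n) {i : ℕ} (hs : c.size i = n) :
    Function.Injective (c.F i) := by
  rw [Finite.injective_iff_surjective_of_equiv (finCongr (by rw [hs]))]
  exact c.F_surj i

end FChain

namespace FChain

variable {k n m l : ℕ}

lemma Iso.refl (c : FChain k n) : c.Iso c :=
  ⟨fun _ => Equiv.refl _, fun _ _ => rfl⟩

lemma Iso.symm {c : FChain k n} {d : FChain k m} (h : c.Iso d) : d.Iso c := by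
  obtain ⟨e, he⟩ := h
  refine ⟨fun i => (e i).symm, fun i x => ?_⟩
  have := he i ((e i).symm x)
  rw [Equiv.apply_symm_apply] at this
  rw [← this, Equiv.symm_apply_apply]

lemma Iso.trans {c : FChain k n} {d : FChain k m} {b : FChain k l}
    (h1 : c.Iso d) (h2 : d.Iso b) : c.Iso b := by
  obtain ⟨e, he⟩ := h1
  obtain ⟨f, hf⟩ := h2
  exact ⟨fun i => (e i).trans (f i), fun i x => by
    simp only [Equiv.trans_apply, he, hf]⟩

lemma iso_size_eq {c : FChain k n} {d : FChain k m} (h : c.Iso d) (i : ℕ) :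
    c.size i = d.size i := by
  obtain ⟨e, -⟩ := h
  simpa using Fintype.card_congr (e i)

lemma iso_F {c : FChain k n} {d : FChain k m} (h : c.Iso d) :
    ∃ (e : ∀ i, Fin (c.size i) ≃ Fin (d.size i)) (σ : Fin n ≃ Fin m),
      ∀ i x, e i (c.F i x) = d.F i (σ x) := by
  obtain ⟨e, he⟩ := h
  refine ⟨e, (finCongr c.size_zero).symm.trans ((e 0).trans (finCongr d.size_zero)), ?_⟩
  intro i
  induction i with
  | zero =>
      intro x
      simp [F, finCongr]
  | succ i ih =>
      intro x
      simp only [F, he, ih]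

end FChain

namespace FChain
variable {k n m l : ℕ}

/-- build an isomorphism from a leaf permutation matching all the level kernels -/
lemma iso_of_ker {c : FChain k n} {d : FChain k m} (σ : Fin n ≃ Fin m)
    (h : ∀ i (x y : Fin n), c.F i x = c.F i y ↔ d.F i (σ x) = d.F i (σ y)) :
    c.Iso d := by
  have hsec : ∀ i a, c.F i (Function.surjInv (c.F_surj i) a) = a :=
    fun i a => Function.surjInv_eq (c.F_surj i) a
  set sec := fun i => Function.surjInv (c.F_surj i) with hsecdef
  set φ : ∀ i, Fin (c.size i) → Fin (d.size i) :=
    fun i a => d.F i (σ (sec i a)) with hφ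
  have key : ∀ i x, φ i (c.F i x) = d.F i (σ x) := by
    intro i x
    exact (h i _ x).mp (hsec i _)
  have hinj : ∀ i, Function.Injective (φ i) := by
    intro i a b hab
    have : c.F i (sec i a) = c.F i (sec i b) := (h i _ _).mpr hab
    rw [hsec, hsec] at this
    exact this
  have hsurj : ∀ i, Function.Surjective (φ i) := by
    intro i b
    obtain ⟨y, hy⟩ := d.F_surj i b
    obtain ⟨x, hx⟩ := σ.surjective y
    exact ⟨c.F i x, by rw [key, hx, hy]⟩
  refine ⟨fun i => Equiv.ofBijective (φ i) ⟨hinj i, hsurj i⟩, ?_⟩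
  intro i x
  obtain ⟨y, hy⟩ := c.F_surj i x
  simp only [Equiv.ofBijective_apply]
  rw [← hy]
  have h1 : c.map i (c.F i y) = c.F (i+1) y := rfl
  show φ (i+1) (c.F (i+1) y) = d.map i (φ i (c.F i y))
  rw [key, key]
  rfl

def HasTriple (c : FChain k n) (i : ℕ) : Prop :=
  ∃ x y z : Fin n, x ≠ y ∧ x ≠ z ∧ y ≠ z ∧ c.F i x = c.F i y ∧ c.F i x = c.F i z

lemma iso_triple {c : FChain k n} {d : FChain k m} (h : c.Iso d) (i : ℕ)
    (ht : c.HasTriple i) : d.HasTriple i := by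
  obtain ⟨e, σ, he⟩ := iso_F h
  obtain ⟨x, y, z, hxy, hxz, hyz, h1, h2⟩ := ht
  refine ⟨σ x, σ y, σ z, by simpa using hxy, by simpa using hxz, by simpa using hyz, ?_, ?_⟩
  · rw [← he, ← he, h1]
  · rw [← he, ← he, h2]

end FChain

def gsize (k t3 t2 i : ℕ) : ℕ :=
  if i < t3 then 4 else if i < t2 then 3 else if i < k then 2 else 1

def gval (k t3 t2 : ℕ) (ε : Bool) (i x : ℕ) : ℕ :=
  if i < t3 then x else if i < t2 then min x 2
  else if i < k then (if ε then min x 1 else x / 2) else 0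

def rval (k t2 : ℕ) (ε : Bool) (i y : ℕ) : ℕ :=
  if i < t2 then y else if i < k then (if ε then y else 2 * y) else 0

lemma gval_lt {k t3 t2 i x : ℕ} (ε : Bool) (hx : x < 4) :
    gval k t3 t2 ε i x < gsize k t3 t2 i := by
  unfold gval gsize; split_ifs <;> omega

lemma rval_lt4 {k t3 t2 i y : ℕ} (ε : Bool) (h2 : t3 ≤ t2) (hy : y < gsize k t3 t2 i) :
    rval k t2 ε i y < 4 := by
  unfold rval gsize at *; split_ifs at * <;> omega

lemma gval_rval {k t3 t2 i y : ℕ} (ε : Bool) (h1 : 1 ≤ t3) (h2 : t3 ≤ t2)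
    (hy : y < gsize k t3 t2 i) :
    gval k t3 t2 ε i (rval k t2 ε i y) = y := by
  unfold gval rval gsize at *; split_ifs at * <;> omega

lemma gval_step {k t3 t2 i x : ℕ} (ε : Bool) (h1 : 1 ≤ t3) (h2 : t3 ≤ t2) (h3 : t2 ≤ k)
    (hx : x < 4) :
    gval k t3 t2 ε (i+1) (rval k t2 ε i (gval k t3 t2 ε i x)) = gval k t3 t2 ε (i+1) x := by
  unfold gval rval; split_ifs <;> omega

def G (k t3 t2 : ℕ) (ε : Bool) (h1 : 1 ≤ t3) (h2 : t3 ≤ t2) (h3 : t2 ≤ k) : FChain k 4 where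
  size i := gsize k t3 t2 i
  map i y := ⟨gval k t3 t2 ε (i+1) (rval k t2 ε i y.val), gval_lt ε (rval_lt4 ε h2 y.isLt)⟩
  surj i := by
    intro b
    refine ⟨⟨gval k t3 t2 ε i (rval k t2 ε (i+1) b.val), gval_lt ε (rval_lt4 ε h2 b.isLt)⟩, ?_⟩
    apply Fin.ext
    show gval k t3 t2 ε (i+1) (rval k t2 ε i (gval k t3 t2 ε i (rval k t2 ε (i+1) b.val))) = b.val
    rw [gval_step ε h1 h2 h3 (rval_lt4 ε h2 b.isLt), gval_rval ε h1 h2 b.isLt]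
  size_zero := by show gsize k t3 t2 0 = 4; unfold gsize; split_ifs <;> omega
  size_top := by show gsize k t3 t2 k = 1; unfold gsize; split_ifs <;> omega

lemma G_exact {k t3 t2 : ℕ} {ε : Bool} {h1 : 1 ≤ t3} {h2 : t3 ≤ t2} {h3 : t2 ≤ k}
    (hk : 1 ≤ k) : (G k t3 t2 ε h1 h2 h3).ExactSlope := by
  right
  show 2 ≤ gsize k t3 t2 (k-1)
  unfold gsize; split_ifs <;> omega

lemma G_F_val {k t3 t2 : ℕ} {ε : Bool} {h1 : 1 ≤ t3} {h2 : t3 ≤ t2} {h3 : t2 ≤ k}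
    (i : ℕ) (x : Fin 4) :
    (((G k t3 t2 ε h1 h2 h3).F i) x).val = gval k t3 t2 ε i x.val := by
  induction i with
  | zero =>
      show ((finCongr _) x).val = _
      unfold gval
      simp only [finCongr_apply, Fin.coe_cast]
      split_ifs <;> omega
  | succ i ih =>
      show gval k t3 t2 ε (i+1) (rval k t2 ε i (((G k t3 t2 ε h1 h2 h3).F i) x).val) = _
      rw [ih, gval_step ε h1 h2 h3 x.isLt]

lemma G_triple {k t3 t2 : ℕ} {ε : Bool} {h1 : 1 ≤ t3} {h2 : t3 ≤ t2} {h3 : t2 ≤ k}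
    (hlt : t2 < k) : (G k t3 t2 ε h1 h2 h3).HasTriple t2 ↔ ε = true := by
  constructor
  · rintro ⟨x, y, z, hxy, hxz, hyz, e1, e2⟩
    have v1 := congrArg Fin.val e1
    have v2 := congrArg Fin.val e2
    simp only [G_F_val] at v1 v2
    have nxy : x.val ≠ y.val := fun h => hxy (Fin.ext h)
    have nxz : x.val ≠ z.val := fun h => hxz (Fin.ext h)
    have nyz : y.val ≠ z.val := fun h => hyz (Fin.ext h)
    have bx := x.isLt; have by' := y.isLt; have bz := z.isLt
    unfold gval at v1 v2
    split_ifs at v1 v2 <;> first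
      | assumption
      | omega
  · intro hε
    subst hε
    refine ⟨⟨1, by omega⟩, ⟨2, by omega⟩, ⟨3, by omega⟩, by simp, by simp, by simp, ?_, ?_⟩
    · apply Fin.ext
      rw [G_F_val, G_F_val]
      show gval k t3 t2 true t2 1 = gval k t3 t2 true t2 2
      unfold gval
      split_ifs <;> first | omega | simp_all
    · apply Fin.ext
      rw [G_F_val, G_F_val]
      show gval k t3 t2 true t2 1 = gval k t3 t2 true t2 3
      unfold gval
      split_ifs <;> first | omega | simp_all

lemma G_param_eq {k t3 t2 t3' t2' : ℕ} {ε ε' : Bool}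
    {h1 : 1 ≤ t3} {h2 : t3 ≤ t2} {h3 : t2 ≤ k}
    {h1' : 1 ≤ t3'} {h2' : t3' ≤ t2'} {h3' : t2' ≤ k}
    (iso : (G k t3 t2 ε h1 h2 h3).Iso (G k t3' t2' ε' h1' h2' h3')) :
    t3 = t3' ∧ t2 = t2' ∧ (t2 < k → ε = ε') := by
  have l1 : ∀ i, gsize k t3 t2 i = gsize k t3' t2' i := fun i => FChain.iso_size_eq iso i
  have ht3 : t3 = t3' := by
    rcases lt_trichotomy t3 t3' with h | h | h
    · have := l1 t3; unfold gsize at this; split_ifs at this <;> omega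
    · exact h
    · have := l1 t3'; unfold gsize at this; split_ifs at this <;> omega
  have ht2 : t2 = t2' := by
    rcases lt_trichotomy t2 t2' with h | h | h
    · have := l1 t2; unfold gsize at this; split_ifs at this <;> omega
    · exact h
    · have := l1 t2'; unfold gsize at this; split_ifs at this <;> omega
  subst ht3; subst ht2
  refine ⟨rfl, rfl, fun hlt => ?_⟩
  have fwd : (G k t3 t2 ε h1 h2 h3).HasTriple t2 ↔ (G k t3 t2 ε' h1' h2' h3').HasTriple t2 :=
    ⟨FChain.iso_triple iso t2, FChain.iso_triple iso.symm t2⟩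
  rw [G_triple hlt, G_triple hlt] at fwd
  cases ε <;> cases ε' <;> simp_all

set_option maxRecDepth 40000 in
lemma keyP : ∀ p : Fin 4 → Fin 3, Function.Surjective p →
    ∃ σ : Equiv.Perm (Fin 4), (∀ x y, p x = p y ↔ min (σ x).val 2 = min (σ y).val 2) := by
  decide

set_option maxRecDepth 40000 in
lemma keyQ : ∀ q : Fin 4 → Fin 2, Function.Surjective q →
    ∃ (σ : Equiv.Perm (Fin 4)) (ε : Bool),
      (∀ x y, q x = q y ↔ (if ε then min (σ x).val 1 else (σ x).val / 2)
        = (if ε then min (σ y).val 1 else (σ y).val / 2)) := by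
  decide

set_option maxRecDepth 100000 in
lemma keyPQ : ∀ (p : Fin 4 → Fin 3) (q : Fin 4 → Fin 2), Function.Surjective p →
    Function.Surjective q → (∀ x y, p x = p y → q x = q y) →
    ∃ (σ : Equiv.Perm (Fin 4)) (ε : Bool),
      (∀ x y : Fin 4, p x = p y ↔ min (σ x).val 2 = min (σ y).val 2) ∧
      (∀ x y : Fin 4, q x = q y ↔ (if ε then min (σ x).val 1 else (σ x).val / 2)
        = (if ε then min (σ y).val 1 else (σ y).val / 2)) := by
  decide

theorem classify {k : ℕ} (hk : 1 ≤ k) (c : FChain k 4) (hc : c.ExactSlope) :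
    ∃ (t3 t2 : ℕ) (h1 : 1 ≤ t3) (h2 : t3 ≤ t2) (h3 : t2 ≤ k) (ε : Bool),
      (t2 = k → ε = false) ∧ c.Iso (G k t3 t2 ε h1 h2 h3) := by
  classical
  have hex : 2 ≤ c.size (k - 1) := hc.resolve_left (by omega)
  have hsz0 : c.size 0 = 4 := c.size_zero
  have hP3 : ∃ i, c.size i ≤ 3 := ⟨k, by rw [c.size_top]; omega⟩
  have hP2 : ∃ i, c.size i ≤ 2 := ⟨k, by rw [c.size_top]; omega⟩
  set t3 := Nat.find hP3 with ht3def
  set t2 := Nat.find hP2 with ht2def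
  have ft3 : c.size t3 ≤ 3 := Nat.find_spec hP3
  have ft2 : c.size t2 ≤ 2 := Nat.find_spec hP2
  have h3 : t2 ≤ k := Nat.find_le (by rw [c.size_top]; omega)
  have h2 : t3 ≤ t2 := Nat.find_min' hP3 (by omega)
  have h1 : 1 ≤ t3 := by
    rcases Nat.eq_zero_or_pos t3 with h | h
    · rw [h] at ft3; omega
    · exact h
  have s4 : ∀ i < t3, c.size i = 4 := by
    intro i hi
    have hle : c.size i ≤ 4 := by have := c.size_antitone (Nat.zero_le i); omega
    have := Nat.find_min hP3 hi
    omega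
  have s3 : ∀ i, t3 ≤ i → i < t2 → c.size i = 3 := by
    intro i hi hi2
    have hle : c.size i ≤ 3 := le_trans (c.size_antitone hi) ft3
    have := Nat.find_min hP2 hi2
    omega
  have s2 : ∀ i, t2 ≤ i → i < k → c.size i = 2 := by
    intro i hi hik
    have hle : c.size i ≤ 2 := le_trans (c.size_antitone hi) ft2
    have hge : 2 ≤ c.size i := le_trans hex (c.size_antitone (by omega))
    omega
  have s1 : ∀ i, k ≤ i → c.size i = 1 := fun i hi => c.size_one_of_ge hi
  -- obtain the permutation and the shape bit
  obtain ⟨σ, ε, hεk, cond3, cond2⟩ :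
      ∃ (σ : Fin 4 ≃ Fin 4) (ε : Bool), (t2 = k → ε = false) ∧
        (t3 < t2 → ∀ x y : Fin 4,
          (c.F t3 x = c.F t3 y ↔ min (σ x).val 2 = min (σ y).val 2)) ∧
        (t2 < k → ∀ x y : Fin 4,
          (c.F t2 x = c.F t2 y ↔ (if ε then min (σ x).val 1 else (σ x).val / 2)
            = (if ε then min (σ y).val 1 else (σ y).val / 2))) := by
    by_cases h3lt : t3 < t2
    · have e3 : c.size t3 = 3 := s3 t3 le_rfl h3lt
      set p : Fin 4 → Fin 3 := fun x => finCongr e3 (c.F t3 x) with hp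
      have surjp : Function.Surjective p := (finCongr e3).surjective.comp (c.F_surj t3)
      have piff : ∀ x y, p x = p y ↔ c.F t3 x = c.F t3 y := by
        intro x y; exact Equiv.apply_eq_iff_eq _
      by_cases h2lt : t2 < k
      · have e2 : c.size t2 = 2 := s2 t2 le_rfl h2lt
        set q : Fin 4 → Fin 2 := fun x => finCongr e2 (c.F t2 x) with hq
        have surjq : Function.Surjective q := (finCongr e2).surjective.comp (c.F_surj t2)
        have qiff : ∀ x y, q x = q y ↔ c.F t2 x = c.F t2 y := by
          intro x y; exact Equiv.apply_eq_iff_eq _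
        have compat : ∀ x y, p x = p y → q x = q y := by
          intro x y hxy
          exact (qiff x y).mpr (c.F_mono (le_of_lt h3lt) ((piff x y).mp hxy))
        obtain ⟨σ, ε, hp', hq'⟩ := keyPQ p q surjp surjq compat
        exact ⟨σ, ε, fun hkk => absurd hkk (by omega), fun _ x y => (piff x y).symm.trans (hp' x y),
          fun _ x y => (qiff x y).symm.trans (hq' x y)⟩
      · obtain ⟨σ, hp'⟩ := keyP p surjp
        exact ⟨σ, false, fun _ => rfl, fun _ x y => (piff x y).symm.trans (hp' x y),
          fun h => absurd h h2lt⟩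
    · by_cases h2lt : t2 < k
      · have e2 : c.size t2 = 2 := s2 t2 le_rfl h2lt
        set q : Fin 4 → Fin 2 := fun x => finCongr e2 (c.F t2 x) with hq
        have surjq : Function.Surjective q := (finCongr e2).surjective.comp (c.F_surj t2)
        have qiff : ∀ x y, q x = q y ↔ c.F t2 x = c.F t2 y := by
          intro x y; exact Equiv.apply_eq_iff_eq _
        obtain ⟨σ, ε, hq'⟩ := keyQ q surjq
        exact ⟨σ, ε, fun hkk => absurd hkk (by omega), fun h => absurd h h3lt,
          fun _ x y => (qiff x y).symm.trans (hq' x y)⟩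
      · exact ⟨Equiv.refl _, false, fun _ => rfl, fun h => absurd h h3lt,
          fun h => absurd h h2lt⟩
  refine ⟨t3, t2, h1, h2, h3, ε, hεk, ?_⟩
  apply FChain.iso_of_ker σ
  intro i x y
  have grhs : ((G k t3 t2 ε h1 h2 h3).F i (σ x) = (G k t3 t2 ε h1 h2 h3).F i (σ y)) ↔
      gval k t3 t2 ε i (σ x).val = gval k t3 t2 ε i (σ y).val := by
    constructor
    · intro h; have := congrArg Fin.val h; simpa only [G_F_val] using this
    · intro h; apply Fin.ext; rwa [G_F_val, G_F_val]
  rw [grhs]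
  rcases Nat.lt_or_ge i t3 with hi | hi
  · -- size-4 region
    have hinj : Function.Injective (c.F i) := c.F_inj (s4 i hi)
    have gv : ∀ z : Fin 4, gval k t3 t2 ε i z.val = z.val := by
      intro z; unfold gval; rw [if_pos hi]
    rw [gv, gv]
    constructor
    · intro h; exact congrArg Fin.val (congrArg σ (hinj h))
    · intro h; exact congrArg (c.F i) (σ.injective (Fin.ext h))
  rcases Nat.lt_or_ge i t2 with hi2 | hi2
  · -- size-3 region
    have h3lt : t3 < t2 := lt_of_le_of_lt hi hi2
    have e33 : c.size t3 = c.size i := by rw [s3 t3 le_rfl h3lt, s3 i hi hi2]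
    have gv : ∀ z : Fin 4, gval k t3 t2 ε i z.val = min z.val 2 := by
      intro z; unfold gval; rw [if_neg (by omega), if_pos hi2]
    rw [gv, gv]
    constructor
    · intro h
      exact (cond3 h3lt x y).mp (c.F_rev hi e33 h)
    · intro h
      exact c.F_mono hi ((cond3 h3lt x y).mpr h)
  rcases Nat.lt_or_ge i k with hik | hik
  · -- size-2 region
    have h2lt : t2 < k := lt_of_le_of_lt hi2 hik
    have e22 : c.size t2 = c.size i := by rw [s2 t2 le_rfl h2lt, s2 i hi2 hik]
    have gv : ∀ z : Fin 4, gval k t3 t2 ε i z.val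
        = (if ε then min z.val 1 else z.val / 2) := by
      intro z; unfold gval; rw [if_neg (by omega), if_neg (by omega), if_pos hik]
    rw [gv, gv]
    constructor
    · intro h
      exact (cond2 h2lt x y).mp (c.F_rev hi2 e22 h)
    · intro h
      exact c.F_mono hi2 ((cond2 h2lt x y).mpr h)
  · -- size-1 region
    constructor
    · intro _
      unfold gval
      split_ifs <;> omega
    · intro _
      apply Fin.ext
      have b1 := (c.F i x).isLt
      have b2 := (c.F i y).isLt
      have e := s1 i hik
      omega

lemma G_eq {k t3 t2 t3' t2' : ℕ} {ε ε' : Bool} (e3 : t3 = t3') (e2 : t2 = t2') (ee : ε = ε')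
    {h1 : 1 ≤ t3} {h2 : t3 ≤ t2} {h3 : t2 ≤ k}
    {h1' : 1 ≤ t3'} {h2' : t3' ≤ t2'} {h3' : t2' ≤ k} :
    G k t3 t2 ε h1 h2 h3 = G k t3' t2' ε' h1' h2' h3' := by
  subst e3; subst e2; subst ee; rfl

noncomputable def encode (k : ℕ) (hk : 1 ≤ k) (p : Fin k × Fin k) :
    {c : FChain k 4 // c.ExactSlope} :=
  if h : p.1.val ≤ p.2.val then
    ⟨G k (p.1.val+1) (p.2.val+1) false (by omega) (by omega) (by have := p.2.isLt; omega),
      G_exact hk⟩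
  else
    ⟨G k (p.2.val+1) p.1.val true (by omega) (by omega) (by have := p.1.isLt; omega),
      G_exact hk⟩

/-- φ(k,4) = k²: there are exactly k² isomorphism classes of untwisted
multiplicity-one fission trees of slope exactly k with 4 leaves. -/
theorem phi_four_leaves (k : ℕ) (hk : 1 ≤ k) : phi k 4 = k ^ 2 := by
  classical
  set r := fun c d : {c : FChain k 4 // c.ExactSlope} => c.1.Iso d.1 with hr
  have requiv : Equivalence r :=
    ⟨fun a => FChain.Iso.refl a.1, fun h => FChain.Iso.symm h, fun h g => FChain.Iso.trans h g⟩
  have hinj : Function.Injective (fun p : Fin k × Fin k => Quot.mk r (encode k hk p)) := by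
    intro p q hpq
    simp only at hpq
    rw [Quot.eq, requiv.eqvGen_iff] at hpq
    have h : (encode k hk p).1.Iso (encode k hk q).1 := hpq
    have bp1 := p.1.isLt; have bp2 := p.2.isLt
    have bq1 := q.1.isLt; have bq2 := q.2.isLt
    unfold encode at h
    by_cases hp : p.1.val ≤ p.2.val <;> by_cases hq : q.1.val ≤ q.2.val
    · rw [dif_pos hp, dif_pos hq] at h
      have h' : (G k (p.1.val+1) (p.2.val+1) false (by omega) (by omega) (by omega)).Iso
          (G k (q.1.val+1) (q.2.val+1) false (by omega) (by omega) (by omega)) := h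
      obtain ⟨e1, e2, -⟩ := G_param_eq h'
      exact Prod.ext (Fin.ext (by omega)) (Fin.ext (by omega))
    · rw [dif_pos hp, dif_neg hq] at h
      have h' : (G k (p.1.val+1) (p.2.val+1) false (by omega) (by omega) (by omega)).Iso
          (G k (q.2.val+1) q.1.val true (by omega) (by omega) (by omega)) := h
      obtain ⟨e1, e2, e3⟩ := G_param_eq h'
      exact absurd (e3 (by omega)) (by simp)
    · rw [dif_neg hp, dif_pos hq] at h
      have h' : (G k (p.2.val+1) p.1.val true (by omega) (by omega) (by omega)).Iso
          (G k (q.1.val+1) (q.2.val+1) false (by omega) (by omega) (by omega)) := h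
      obtain ⟨e1, e2, e3⟩ := G_param_eq h'
      exact absurd (e3 (by omega)) (by simp)
    · rw [dif_neg hp, dif_neg hq] at h
      have h' : (G k (p.2.val+1) p.1.val true (by omega) (by omega) (by omega)).Iso
          (G k (q.2.val+1) q.1.val true (by omega) (by omega) (by omega)) := h
      obtain ⟨e1, e2, -⟩ := G_param_eq h'
      exact Prod.ext (Fin.ext (by omega)) (Fin.ext (by omega))
  have hsurj : Function.Surjective (fun p : Fin k × Fin k => Quot.mk r (encode k hk p)) := by
    intro x
    induction x using Quot.ind with
    | _ a =>
      obtain ⟨c, hc⟩ := a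
      obtain ⟨t3, t2, h1, h2, h3, ε, hεk, iso⟩ := classify hk c hc
      cases ε with
      | false =>
          refine ⟨(⟨t3 - 1, by omega⟩, ⟨t2 - 1, by omega⟩), ?_⟩
          simp only
          apply Quot.sound
          show (encode k hk _).1.Iso c
          unfold encode
          rw [dif_pos (by simp only []; omega)]
          simp only
          rw [G_eq (show t3 - 1 + 1 = t3 by omega) (show t2 - 1 + 1 = t2 by omega) rfl
            (h1' := h1) (h2' := h2) (h3' := h3)]
          exact iso.symm
      | true =>
          have ht2k : t2 < k := by
            rcases Nat.lt_or_ge t2 k with h | h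
            · exact h
            · exact absurd (hεk (by omega)) (by simp)
          refine ⟨(⟨t2, ht2k⟩, ⟨t3 - 1, by omega⟩), ?_⟩
          simp only
          apply Quot.sound
          show (encode k hk _).1.Iso c
          unfold encode
          rw [dif_neg (by simp only []; omega)]
          simp only
          rw [G_eq (show t3 - 1 + 1 = t3 by omega) rfl rfl
            (h1' := h1) (h2' := h2) (h3' := h3)]
          exact iso.symm
  have := Nat.card_eq_of_bijective _ ⟨hinj, hsurj⟩
  unfold phi
  rw [← this]
  simp [Nat.card_eq_fintype_card, sq]
end
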